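/- arXiv:1801.03895 — 11 statements merged into one kernel-verified Lean document; each statement's English description precedes it below -/
import Mathlib

section
/- For any valid index code with locality r = 1, for every receiver i and any set P ⊂ [N] with i ∉ P: (i) I(c_{R_i}; x_i | x_{K_i ∪ P}) = m; (ii) H(c_{R_i} | x_i, x_{K_i}) = 0; and (iii) H(c_{R_i} | x_P) = m, where entropy is measured in units of log |A|. -/
open Finset

/-- A unicast index coding problem on `N` receivers: receiver `i` demands message `i`
and knows messages indexed by `K i` as side information, with `i ∉ K i`. -/
structure IndexProblem (N : ℕ) where
  K : Fin N → Finset (Fin N)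
  not_self : ∀ i, i ∉ K i

/-- A valid index code over alphabet `A` with message length `m` and codeword length `ℓ`:
an encoder together with query sets `R i`, such that receiver `i` can decode `x i`
exactly from the queried codeword symbols `c_{R i}` and its side information. -/
structure IndexCode (N : ℕ) (G : IndexProblem N) (A : Type*) (m ℓ : ℕ) where
  enc : (Fin N → Fin m → A) → Fin ℓ → A
  R : Fin N → Finset (Fin ℓ)
  valid : ∀ (i : Fin N) (x y : Fin N → Fin m → A),
    (∀ t ∈ R i, enc x t = enc y t) → (∀ j ∈ G.K i, x j = y j) → x i = y i

/-- The optimal broadcast rate function `β_G^*(r)`: the infimum of broadcast rates `ℓ/m`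
over all message lengths `m ≥ 1` and valid index codes with locality at most `r`. -/
noncomputable def betaStar (A : Type*) {N : ℕ} (G : IndexProblem N) (r : ℝ) : ℝ :=
  sInf {β : ℝ | ∃ (m ℓ : ℕ) (_ : 0 < m) (C : IndexCode N G A m ℓ),
    (∀ i, ((C.R i).card : ℝ) ≤ r * m) ∧ β = (ℓ : ℝ) / m}

/-- Probability of the event `X = a` under the uniform distribution on the finite sample space `Ω`. -/
noncomputable def pr {Ω α : Type*} [Fintype Ω] [DecidableEq α] (X : Ω → α) (a : α) : ℝ :=
  ((Finset.univ.filter fun ω => X ω = a).card : ℝ) / (Fintype.card Ω : ℝ)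

/-- Shannon entropy (in nats) of a random variable on a uniform finite sample space. -/
noncomputable def ent {Ω α : Type*} [Fintype Ω] [Fintype α] [DecidableEq α] (X : Ω → α) : ℝ :=
  -∑ a : α, pr X a * Real.log (pr X a)

/-- Conditional entropy `H(X | Y)` (in nats). -/
noncomputable def condEnt {Ω α β : Type*} [Fintype Ω] [Fintype α] [Fintype β]
    [DecidableEq α] [DecidableEq β] (X : Ω → α) (Y : Ω → β) : ℝ :=
  ent (fun ω => (X ω, Y ω)) - ent Y

/-- Conditional mutual information `I(X ; Y | Z)` (in nats). -/
noncomputable def condMI {Ω α β γ : Type*} [Fintype Ω] [Fintype α] [Fintype β] [Fintype γ]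
    [DecidableEq α] [DecidableEq β] [DecidableEq γ]
    (X : Ω → α) (Y : Ω → β) (Z : Ω → γ) : ℝ :=
  condEnt X Z - condEnt X (fun ω => (Y ω, Z ω))

/-! Decodability makes `a ↦ c_{R_i}(x with x_i := a)` injective from `A^m` to `A^{R_i}`, and
`|R_i| ≤ m` makes it a bijection. Hence `c_{R_i}` is a function of `(x_i, x_{K_i})`, which gives
(ii) and the vanishing of the second term of (i). Moreover, after identifying `A^{R_i}` with `A^m`,
the substitution `x_i := c_{R_i}(x)` is a bijection of the message space, so `(c_{R_i}, x_P)` is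
uniform whenever `i ∉ P`; this gives (iii) and the first term of (i). -/

open Function Fintype

section Entropy

variable {Ω α β : Type*} [Fintype Ω] [DecidableEq α]

lemma pr_comp_equiv {Ω' : Type*} [Fintype Ω'] (Φ : Ω' ≃ Ω) (X : Ω → α) (a : α) :
    pr (fun ω => X (Φ ω)) a = pr X a := by
  unfold pr
  rw [card_congr Φ, Finset.card_equiv Φ (t := univ.filter fun ω => X ω = a) (by simp)]

variable [Fintype α] [Fintype β] [DecidableEq β]

lemma ent_comp_equiv {Ω' : Type*} [Fintype Ω'] (Φ : Ω' ≃ Ω) (X : Ω → α) :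
    ent (fun ω => X (Φ ω)) = ent X := by
  simp only [ent, pr_comp_equiv]

lemma ent_eq_sum_image (X : Ω → α) :
    ent X = -∑ a ∈ univ.image X, pr X a * Real.log (pr X a) := by
  refine congrArg Neg.neg (sum_subset (subset_univ _) fun a _ ha => ?_).symm
  have : univ.filter (fun ω => X ω = a) = ∅ :=
    filter_eq_empty_iff.2 fun ω _ hω => ha (hω ▸ mem_image_of_mem X (mem_univ ω))
  simp [pr, this]

lemma ent_comp_of_injOn {f : α → β} {X : Ω → α} (hf : Set.InjOn f (Set.range X)) :
    ent (fun ω => f (X ω)) = ent X := by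
  have hpr : ∀ a ∈ univ.image X, pr (f ∘ X) (f a) = pr X a := by
    intro a ha
    obtain ⟨ω₀, -, rfl⟩ := mem_image.1 ha
    unfold pr
    congr 3
    exact filter_congr fun ω _ => hf.eq_iff ⟨ω, rfl⟩ ⟨ω₀, rfl⟩
  rw [ent_eq_sum_image, ent_eq_sum_image, ← comp_def, ← image_image,
    sum_image fun a ha b hb => hf (by simpa using ha) (by simpa using hb)]
  exact congrArg Neg.neg (sum_congr rfl fun a ha => by rw [hpr a ha])

lemma ent_pair_eq_left {X : Ω → α} {Y : Ω → β} (h : ∀ ω ω', X ω = X ω' → Y ω = Y ω') :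
    ent (fun ω => (X ω, Y ω)) = ent X := by
  refine (ent_comp_of_injOn (f := Prod.fst) ?_).symm
  rintro _ ⟨ω, rfl⟩ _ ⟨ω', rfl⟩ hX
  exact Prod.ext hX (h ω ω' hX)

lemma ent_pair_eq_right {X : Ω → α} {Y : Ω → β} (h : ∀ ω ω', Y ω = Y ω' → X ω = X ω') :
    ent (fun ω => (X ω, Y ω)) = ent Y := by
  refine (ent_comp_of_injOn (f := Prod.snd) ?_).symm
  rintro _ ⟨ω, rfl⟩ _ ⟨ω', rfl⟩ hY
  exact Prod.ext (h ω ω' hY) hY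

lemma ent_eq_of_eq_iff {X : Ω → α} {Y : Ω → β} (h : ∀ ω ω', X ω = X ω' ↔ Y ω = Y ω') :
    ent X = ent Y :=
  (ent_pair_eq_left fun ω ω' => (h ω ω').1).symm.trans
    (ent_pair_eq_right fun ω ω' => (h ω ω').2)

lemma condEnt_eq_zero_of_factors {X : Ω → α} {Y : Ω → β}
    (h : ∀ ω ω', Y ω = Y ω' → X ω = X ω') : condEnt X Y = 0 :=
  sub_eq_zero.2 (ent_pair_eq_right h)

lemma ent_fst {γ δ : Type*} [Fintype γ] [Fintype δ] [DecidableEq γ] [Nonempty γ] [Nonempty δ] :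
    ent (fun p : γ × δ => p.1) = Real.log (card γ) := by
  have hpr : ∀ a : γ, pr (fun p : γ × δ => p.1) a = (card γ : ℝ)⁻¹ := by
    intro a
    have hfib : univ.filter (fun p : γ × δ => p.1 = a) = {a} ×ˢ univ := by
      ext p
      simp [Prod.ext_iff, eq_comm]
    have : (card δ : ℝ) ≠ 0 := by positivity
    rw [pr, hfib, card_product, Fintype.card_prod]
    simp only [card_singleton, one_mul, card_univ]
    push_cast
    field_simp
  have : (card γ : ℝ) ≠ 0 := by positivity
  simp only [ent, hpr, sum_const, card_univ, nsmul_eq_mul, Real.log_inv]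
  field_simp

lemma ent_restrict {ι B : Type*} [Fintype ι] [DecidableEq ι] [Fintype B] [DecidableEq B]
    [Nonempty B] (T : Finset ι) :
    ent (fun (x : ι → B) (j : T) => x j) = #T * Real.log (card B) := by
  let e := Equiv.piEquivPiSubtypeProd (· ∈ T) (fun _ => B)
  rw [show (fun (x : ι → B) (j : T) => x j) = fun x => (e x).1 from rfl, ent_comp_equiv e,
    ent_fst, Fintype.card_fun, Fintype.card_coe, Nat.cast_pow, Real.log_pow]

end Entropy

section Decodes

variable {ι B γ : Type*} [DecidableEq ι]

def Decodes (c : (ι → B) → γ) (K : Finset ι) (i : ι) : Prop :=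
  ∀ x y, c x = c y → (∀ j ∈ K, x j = y j) → x i = y i

variable {c : (ι → B) → γ} {K : Finset ι} {i : ι}

lemma Decodes.injective_update (h : Decodes c K i) (hi : i ∉ K) (z : ι → B) :
    Injective fun a => c (update z i a) := fun a b hab => by
  simpa using h _ _ hab fun j hj => by simp [ne_of_mem_of_not_mem hj hi]

lemma Decodes.bijective_update [Fintype B] [Fintype γ] (h : Decodes c K i) (hi : i ∉ K)
    (hcard : card γ ≤ card B) (z : ι → B) : Bijective fun a => c (update z i a) :=
  have hinj := h.injective_update hi z
  (Fintype.bijective_iff_injective_and_card _).2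
    ⟨hinj, (Fintype.card_le_of_injective _ hinj).antisymm hcard⟩

lemma Decodes.eq_of_eq_on [Fintype B] [Fintype γ] (h : Decodes c K i) (hi : i ∉ K)
    (hcard : card γ ≤ card B) {x y : ι → B} (hxi : x i = y i) (hK : ∀ j ∈ K, x j = y j) :
    c x = c y := by
  obtain ⟨b, hb⟩ := (h.bijective_update hi hcard y).surjective (c x)
  have hb' : x i = b := by
    simpa using h x (update y i b) hb.symm fun j hj => by
      simp [ne_of_mem_of_not_mem hj hi, hK j hj]
  rw [← hb, ← hb', hxi]
  simp

lemma Decodes.bijective_update_self [Finite (ι → B)] (h : Decodes c K i) (hi : i ∉ K)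
    (q : γ ≃ B) : Bijective fun x => update x i (q (c x)) := by
  refine Finite.injective_iff_bijective.1 fun x y hxy => ?_
  have hoff : ∀ j ≠ i, x j = y j := fun j hj => by
    simpa [update_of_ne hj] using congrFun hxy j
  have hc : c x = c y := q.injective (by simpa using congrFun hxy i)
  funext j
  by_cases hj : j = i
  · subst hj
    exact h x y hc fun k hk => hoff k (ne_of_mem_of_not_mem hk hi)
  · exact hoff j hj

variable [Fintype ι] [Fintype B] [DecidableEq B] [Fintype γ] [DecidableEq γ]

lemma Decodes.condEnt_pair_eq_zero (h : Decodes c K i) (hi : i ∉ K) (hcard : card γ ≤ card B)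
    {S : Finset ι} (hKS : K ⊆ S) : condEnt c (fun x => (x i, fun j : S => x j)) = 0 := by
  refine condEnt_eq_zero_of_factors fun x y hxy => ?_
  simp only [Prod.mk.injEq, funext_iff, Subtype.forall] at hxy
  exact h.eq_of_eq_on hi hcard hxy.1 fun j hj => hxy.2 j (hKS hj)

lemma Decodes.condEnt_restrict_eq [Nonempty B] (h : Decodes c K i) (hi : i ∉ K)
    (hcard : card γ ≤ card B) {S : Finset ι} (hiS : i ∉ S) :
    condEnt c (fun x (j : S) => x j) = Real.log (card B) := by
  obtain ⟨q⟩ : Nonempty (γ ≃ B) := Fintype.card_eq.1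
    (Fintype.card_of_bijective (h.bijective_update hi hcard (Classical.arbitrary _))).symm
  let Φ := Equiv.ofBijective _ (h.bijective_update_self hi q)
  have hΦS : ∀ x, ∀ j ∈ S, Φ x j = x j := fun x j hj =>
    update_of_ne (ne_of_mem_of_not_mem hj hiS) _ _
  have hpair : ent (fun x => (c x, fun j : S => x j))
      = ent (fun (x : ι → B) (j : ↥(insert i S)) => x j) := by
    refine (ent_eq_of_eq_iff fun x y => ?_).trans
      (ent_comp_equiv Φ fun x (j : ↥(insert i S)) => x j)
    simp only [Prod.mk.injEq, funext_iff, Subtype.forall, forall_mem_insert]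
    rw [show Φ x i = q (c x) from update_self .., show Φ y i = q (c y) from update_self ..,
      q.apply_eq_iff_eq]
    exact and_congr_right' <| forall₂_congr fun j hj => by rw [hΦS x j hj, hΦS y j hj]
  rw [condEnt, hpair, ent_restrict, ent_restrict, card_insert_of_notMem hiS]
  push_cast
  ring

end Decodes

theorem locality_one_entropy_lemma_general {N m ℓ : ℕ} (G : IndexProblem N) (A : Type*)
    [Fintype A] [DecidableEq A] (hA : 1 < Fintype.card A)
    (C : IndexCode N G A m ℓ) (hloc : ∀ i, (C.R i).card ≤ m)
    (i : Fin N) (P : Finset (Fin N)) (hP : i ∉ P) :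
    condMI (fun (x : Fin N → Fin m → A) (t : {t // t ∈ C.R i}) => C.enc x t.val)
        (fun x => x i)
        (fun x (j : {j // j ∈ G.K i ∪ P}) => x j.val)
      = m * Real.log (Fintype.card A) ∧
    condEnt (fun (x : Fin N → Fin m → A) (t : {t // t ∈ C.R i}) => C.enc x t.val)
        (fun x => (x i, fun j : {j // j ∈ G.K i} => x j.val))
      = 0 ∧
    condEnt (fun (x : Fin N → Fin m → A) (t : {t // t ∈ C.R i}) => C.enc x t.val)
        (fun x (j : {j // j ∈ P}) => x j.val)
      = m * Real.log (Fintype.card A) := by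
  have : Nonempty A := Fintype.card_pos_iff.1 (by omega)
  have hdec : Decodes (fun x (t : C.R i) => C.enc x t) (G.K i) i := fun x y hxy hK =>
    C.valid i x y (fun t ht => congrFun hxy ⟨t, ht⟩) hK
  have hi : i ∉ G.K i := G.not_self i
  have hcard : card (C.R i → A) ≤ card (Fin m → A) := by
    simp only [Fintype.card_fun, Fintype.card_coe, Fintype.card_fin]
    exact Nat.pow_le_pow_right (by omega) (hloc i)
  have hlog : Real.log (card (Fin m → A)) = m * Real.log (card A) := by
    rw [Fintype.card_fun, Fintype.card_fin, Nat.cast_pow, Real.log_pow]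
  have hiKP : i ∉ G.K i ∪ P := by simp [hi, hP]
  refine ⟨?_, hdec.condEnt_pair_eq_zero hi hcard subset_rfl, ?_⟩
  · rw [condMI, hdec.condEnt_restrict_eq hi hcard hiKP,
      hdec.condEnt_pair_eq_zero hi hcard subset_union_left, sub_zero, hlog]
  · rw [hdec.condEnt_restrict_eq hi hcard hP, hlog]

/-- for a valid index code with locality `r = 1`, for every receiver `i` and
every `P ⊆ [N]` with `i ∉ P`:
(i) `I(c_{R_i}; x_i | x_{K_i ∪ P}) = m`, (ii) `H(c_{R_i} | x_i, x_{K_i}) = 0`,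
(iii) `H(c_{R_i} | x_P) = m`, entropy measured in units of `log |A|`. -/
theorem locality_one_entropy_lemma {N m ℓ : ℕ} (G : IndexProblem N) (A : Type*)
    [Fintype A] [DecidableEq A] (hA : 1 < Fintype.card A) (hm : 0 < m)
    (C : IndexCode N G A m ℓ) (hloc : ∀ i, (C.R i).card ≤ m)
    (i : Fin N) (P : Finset (Fin N)) (hP : i ∉ P) :
    condMI (fun (x : Fin N → Fin m → A) (t : {t // t ∈ C.R i}) => C.enc x t.val)
        (fun x => x i)
        (fun x (j : {j // j ∈ G.K i ∪ P}) => x j.val)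
      = m * Real.log (Fintype.card A) ∧
    condEnt (fun (x : Fin N → Fin m → A) (t : {t // t ∈ C.R i}) => C.enc x t.val)
        (fun x => (x i, fun j : {j // j ∈ G.K i} => x j.val))
      = 0 ∧
    condEnt (fun (x : Fin N → Fin m → A) (t : {t // t ∈ C.R i}) => C.enc x t.val)
        (fun x (j : {j // j ∈ P}) => x j.val)
      = m * Real.log (Fintype.card A) :=
  locality_one_entropy_lemma_general G A hA C hloc i P hP
end

section
/- For any valid index code with locality r = 1 for a unicast index coding problem G, if {i, j} is an edge of the interference graph (i.e., i ∉ K_j or j ∉ K_i), then the query sets satisfy R_i ∩ R_j = ∅. -/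
open Finset

lemma aux_surj {N m ℓ : ℕ} (G : IndexProblem N) {A : Type*} [Fintype A]
    (hA : 1 < Fintype.card A)
    (C : IndexCode N G A m ℓ) (hloc : ∀ i, (C.R i).card ≤ m)
    (i : Fin N) (z : Fin N → Fin m → A) :
    Function.Surjective (fun (a : Fin m → A) (t : (C.R i : Finset (Fin ℓ))) =>
      C.enc (Function.update z i a) t) := by
  classical
  set f := (fun (a : Fin m → A) (t : (C.R i : Finset (Fin ℓ))) =>
      C.enc (Function.update z i a) t) with hf
  have hinj : Function.Injective f := by
    intro a b hab
    have h := C.valid i (Function.update z i a) (Function.update z i b)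
      (fun t ht => congrFun hab ⟨t, ht⟩)
      (by
        intro k hk
        have hk' : k ≠ i := fun h => G.not_self i (h ▸ hk)
        simp [Function.update_of_ne hk'])
    simpa using h
  have hcard : Fintype.card (↥(C.R i) → A)
      ≤ Fintype.card (Fin m → A) := by
    rw [Fintype.card_fun, Fintype.card_fun, Fintype.card_coe, Fintype.card_fin]
    exact Nat.pow_le_pow_right (lt_trans one_pos hA) (hloc i)
  have hle := Fintype.card_le_of_injective f hinj
  exact ((Fintype.bijective_iff_injective_and_card f).2
    ⟨hinj, le_antisymm hle hcard⟩).surjective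

lemma enc_indep {N m ℓ : ℕ} (G : IndexProblem N) {A : Type*} [Fintype A]
    (hA : 1 < Fintype.card A)
    (C : IndexCode N G A m ℓ) (hloc : ∀ i, (C.R i).card ≤ m)
    (i j : Fin N) (hij : i ≠ j) (hjK : j ∉ G.K i)
    (z : Fin N → Fin m → A) (b b' : Fin m → A)
    (s : Fin ℓ) (hs : s ∈ C.R i) :
    C.enc (Function.update z j b) s = C.enc (Function.update z j b') s := by
  classical
  obtain ⟨a, ha⟩ := aux_surj G hA C hloc i (Function.update z j b')
    (fun t : (C.R i : Finset (Fin ℓ)) => C.enc (Function.update z j b) t)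
  have ha' : ∀ t ∈ C.R i,
      C.enc (Function.update (Function.update z j b') i a) t
        = C.enc (Function.update z j b) t := fun t ht => congrFun ha ⟨t, ht⟩
  have hval := C.valid i (Function.update z j b)
    (Function.update (Function.update z j b') i a)
    (fun t ht => (ha' t ht).symm)
    (by
      intro k hk
      have hki : k ≠ i := fun h => G.not_self i (h ▸ hk)
      have hkj : k ≠ j := fun h => hjK (h ▸ hk)
      simp [Function.update_of_ne hki, Function.update_of_ne hkj])
  have hzi : z i = a := by
    simpa [Function.update_of_ne hij] using hval
  have hupd : Function.update (Function.update z j b') i a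
      = Function.update z j b' := by
    rw [← hzi]
    have : (Function.update z j b') i = z i := Function.update_of_ne hij _ _
    rw [← this, Function.update_eq_self]
  have := ha' s hs
  rw [hupd] at this
  exact this.symm

lemma key_case {N m ℓ : ℕ} (G : IndexProblem N) {A : Type*} [Fintype A]
    (hA : 1 < Fintype.card A)
    (C : IndexCode N G A m ℓ) (hloc : ∀ i, (C.R i).card ≤ m)
    (i j : Fin N) (hij : i ≠ j) (hjK : j ∉ G.K i)
    (t : Fin ℓ) (hti : t ∈ C.R i) (htj : t ∈ C.R j) : False := by
  classical
  have hne : Nonempty A := Fintype.card_pos_iff.mp (lt_trans one_pos hA)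
  obtain ⟨v⟩ := hne
  set z : Fin N → Fin m → A := fun _ _ => v with hz
  set b₀ : Fin m → A := fun _ => v with hb₀
  set c : A := C.enc (Function.update z j b₀) t with hc
  obtain ⟨a', ha'⟩ := Fintype.exists_ne_of_one_lt_card hA c
  obtain ⟨a, ha⟩ := aux_surj G hA C hloc j z
    (fun _ : (C.R j : Finset (Fin ℓ)) => a')
  have h1 : C.enc (Function.update z j a) t = a' := congrFun ha ⟨t, htj⟩
  have h2 : C.enc (Function.update z j a) t = c :=
    enc_indep G hA C hloc i j hij hjK z a b₀ t hti
  exact ha' (h1.symm.trans h2)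

/-- for any valid index code with locality `r = 1`, if `{i,j}` is an edge of
the interference graph (`i ∉ K j` or `j ∉ K i`), then `R i ∩ R j = ∅`. -/
theorem locality_one_disjoint_queries {N m ℓ : ℕ} (G : IndexProblem N) (A : Type*)
    [Fintype A] (hA : 1 < Fintype.card A) (hm : 0 < m)
    (C : IndexCode N G A m ℓ) (hloc : ∀ i, (C.R i).card ≤ m)
    (i j : Fin N) (hij : i ≠ j) (hedge : i ∉ G.K j ∨ j ∉ G.K i) :
    C.R i ∩ C.R j = ∅ := by
  classical
  by_contra h
  obtain ⟨t, ht⟩ := Finset.nonempty_iff_ne_empty.mpr h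
  rw [Finset.mem_inter] at ht
  rcases hedge with hiK | hjK
  · exact key_case G hA C hloc j i hij.symm hiK t ht.2 ht.1
  · exact key_case G hA C hloc i j hij hjK t ht.1 ht.2
end

section
/- For any valid index code with locality r = 1 for a unicast index coding problem G, the broadcast rate satisfies β ≥ χ_f(Ḡ_u), the fractional chromatic number of the interference graph of G. -/
open Finset

/-- An `a:b` coloring of the interference graph of `G`: each vertex gets a set of `b` colors
from `[a]`, and vertices joined by an edge of the interference graph (i.e. `i ≠ j` with
`i ∉ K j` or `j ∉ K i`) receive disjoint color sets. -/
def IsABColoring {N : ℕ} (G : IndexProblem N) (a b : ℕ) (C : Fin N → Finset (Fin a)) : Prop :=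
  (∀ i, (C i).card = b) ∧
  ∀ i j, i ≠ j → (i ∉ G.K j ∨ j ∉ G.K i) → Disjoint (C i) (C j)

/-- The fractional chromatic number `χ_f` of the interference graph of `G`, as the
infimum of `a/b` over all `a:b` colorings. -/
noncomputable def fracChrom {N : ℕ} (G : IndexProblem N) : ℝ :=
  sInf {q : ℝ | ∃ (a b : ℕ) (C : Fin N → Finset (Fin a)),
    0 < b ∧ IsABColoring G a b C ∧ q = (a : ℝ) / b}


section Aux
variable {N m ℓ : ℕ} {G : IndexProblem N} {A : Type*} [Fintype A]

lemma card_R_ge (hA : 1 < Fintype.card A) (C : IndexCode N G A m ℓ) (i : Fin N) :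
    m ≤ (C.R i).card := by
  have hne : Nonempty A := Fintype.card_pos_iff.mp (by omega)
  obtain ⟨a0⟩ := hne
  set z : (Fin m → A) → Fin N → Fin m → A :=
    fun u k => if k = i then u else fun _ => a0 with hz
  have hinj : Function.Injective (fun u : Fin m → A => fun t : ↥(C.R i) => C.enc (z u) t) := by
    intro u v h
    have h1 : ∀ t ∈ C.R i, C.enc (z u) t = C.enc (z v) t := by
      intro t ht; exact congrFun h ⟨t, ht⟩
    have h2 : ∀ j ∈ G.K i, z u j = z v j := by
      intro j hj
      have : j ≠ i := fun e => G.not_self i (e ▸ hj)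
      simp [hz, this]
    have := C.valid i (z u) (z v) h1 h2
    simpa [hz] using this
  have hc := Fintype.card_le_of_injective _ hinj
  simp only [Fintype.card_fun, Fintype.card_fin, Fintype.card_coe] at hc
  exact (Nat.pow_le_pow_iff_right hA).mp hc

lemma disjoint_R (hA : 1 < Fintype.card A) (hm : 0 < m)
    (C : IndexCode N G A m ℓ) (hloc : ∀ i, (C.R i).card ≤ m)
    {i j : Fin N} (hij : i ≠ j) (hK : j ∉ G.K i) :
    Disjoint (C.R i) (C.R j) := by
  have hne : Nonempty A := Fintype.card_pos_iff.mp (by omega)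
  obtain ⟨a0⟩ := hne
  set z : (Fin m → A) → (Fin m → A) → Fin N → Fin m → A :=
    fun u v k => if k = i then u else if k = j then v else fun _ => a0 with hz
  have hinj : Function.Injective
      (fun p : (Fin m → A) × (Fin m → A) =>
        fun t : ↥(C.R i ∪ C.R j) => C.enc (z p.1 p.2) t) := by
    rintro ⟨u, v⟩ ⟨u', v'⟩ h
    have hT : ∀ t ∈ C.R i ∪ C.R j, C.enc (z u v) t = C.enc (z u' v') t := by
      intro t ht; exact congrFun h ⟨t, ht⟩
    have hu : u = u' := by
      have h1 : ∀ t ∈ C.R i, C.enc (z u v) t = C.enc (z u' v') t :=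
        fun t ht => hT t (mem_union_left _ ht)
      have h2 : ∀ k ∈ G.K i, z u v k = z u' v' k := by
        intro k hk
        have hki : k ≠ i := fun e => G.not_self i (e ▸ hk)
        have hkj : k ≠ j := fun e => hK (e ▸ hk)
        simp [hz, hki, hkj]
      have := C.valid i (z u v) (z u' v') h1 h2
      simpa [hz] using this
    have hv : v = v' := by
      have h1 : ∀ t ∈ C.R j, C.enc (z u v) t = C.enc (z u' v') t :=
        fun t ht => hT t (mem_union_right _ ht)
      have h2 : ∀ k ∈ G.K j, z u v k = z u' v' k := by
        intro k hk
        by_cases hki : k = i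
        · simp [hz, hki, hij, hu]
        · have hkj : k ≠ j := fun e => G.not_self j (e ▸ hk)
          simp [hz, hki, hkj]
      have := C.valid j (z u v) (z u' v') h1 h2
      simpa [hz, hij.symm] using this
    exact Prod.ext hu hv
  have hc := Fintype.card_le_of_injective _ hinj
  simp only [Fintype.card_prod, Fintype.card_fun, Fintype.card_fin, Fintype.card_coe,
    ← pow_add] at hc
  have hcard : m + m ≤ (C.R i ∪ C.R j).card := (Nat.pow_le_pow_iff_right hA).mp hc
  have h1 := card_union_add_card_inter (C.R i) (C.R j)
  have h2 : ((C.R i) ∩ (C.R j)).card = 0 := by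
    have := hloc i; have := hloc j
    have := card_union_le (C.R i) (C.R j)
    omega
  rw [disjoint_iff_inter_eq_empty]
  exact card_eq_zero.mp h2

end Aux

/-- any valid index code with locality `r = 1` has broadcast rate
`β = ℓ/m ≥ χ_f(Ḡ_u)`. -/
theorem locality_one_rate_ge_fracChrom {N m ℓ : ℕ} (G : IndexProblem N) (A : Type*)
    [Fintype A] (hA : 1 < Fintype.card A) (hm : 0 < m)
    (C : IndexCode N G A m ℓ) (hloc : ∀ i, (C.R i).card ≤ m) :
    fracChrom G ≤ (ℓ : ℝ) / m := by
  have hcard : ∀ i, (C.R i).card = m := fun i => le_antisymm (hloc i) (card_R_ge hA C i)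
  apply csInf_le
  · refine ⟨0, ?_⟩
    rintro q ⟨a, b, C', hb, _, rfl⟩
    positivity
  · refine ⟨ℓ, m, C.R, hm, ⟨hcard, ?_⟩, rfl⟩
    intro i j hij h
    rcases h with h | h
    · exact (disjoint_R hA hm C hloc hij.symm h).symm
    · exact disjoint_R hA hm C hloc hij h
end

section
/- The fractional coloring index coding scheme is a valid index code with locality 1 and broadcast rate a/b, for any a:b coloring of the interference graph; hence β_G*(1) ≤ χ_f(Ḡ_u). -/
open Finset

/-! Codeword symbol `t` is the sum of the symbols of color `t` of all messages colored `t`.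
Those messages form a clique of the side-information graph, so a receiver colored `t` knows
every summand but its own and recovers it by subtraction; thus `b` symbols are decoded from `b`
queries, at rate `a / b`. -/

section FractionalColoring

variable {N a b : ℕ} {G : IndexProblem N} {Col : Fin N → Finset (Fin a)}

theorem IsABColoring.mem_K_of_mem_of_mem (hC : IsABColoring G a b Col) {i j : Fin N}
    {t : Fin a} (hji : j ≠ i) (hti : t ∈ Col i) (htj : t ∈ Col j) : j ∈ G.K i := by
  by_contra hK
  exact disjoint_left.mp (hC.2 j i hji (Or.inl hK)) htj hti

theorem isABColoring_singleton (G : IndexProblem N) : IsABColoring G N 1 fun i => {i} :=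
  ⟨fun _ => card_singleton _, fun _ _ hij _ => disjoint_singleton.mpr hij⟩

variable {A : Type*} [AddCommGroup A]

/-- The `b` symbols of message `j` are indexed by the colors of `Col j` in increasing order,
and the one of color `t` is the contribution of `j` to codeword symbol `t`. -/
def colorContribution (hcard : ∀ j, (Col j).card = b) (x : Fin N → Fin b → A) (j : Fin N)
    (t : Fin a) : A :=
  if h : t ∈ Col j then x j (((Col j).orderIsoOfFin (hcard j)).symm ⟨t, h⟩) else 0

theorem colorContribution_orderIsoOfFin (hcard : ∀ j, (Col j).card = b)
    (x : Fin N → Fin b → A) (i : Fin N) (s : Fin b) :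
    colorContribution hcard x i ((Col i).orderIsoOfFin (hcard i) s) = x i s := by
  rw [colorContribution, dif_pos ((Col i).orderIsoOfFin (hcard i) s).2, Subtype.coe_eta,
    OrderIso.symm_apply_apply]

theorem colorContribution_eq_of_agree_on_K (hC : IsABColoring G a b Col)
    {x y : Fin N → Fin b → A} {i j : Fin N} {t : Fin a} (hside : ∀ k ∈ G.K i, x k = y k)
    (hji : j ≠ i) (hti : t ∈ Col i) :
    colorContribution hC.1 x j t = colorContribution hC.1 y j t := by
  by_cases htj : t ∈ Col j
  · simp only [colorContribution, htj, dif_pos, hside j (hC.mem_K_of_mem_of_mem hji hti htj)]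
  · simp only [colorContribution, htj, dif_neg, not_false_eq_true]

variable (A) in
def fractionalColoringCode (hC : IsABColoring G a b Col) : IndexCode N G A b a where
  enc x t := ∑ j, colorContribution hC.1 x j t
  R := Col
  valid i x y henc hside := by
    funext s
    set t : Fin a := ↑((Col i).orderIsoOfFin (hC.1 i) s)
    have hti : t ∈ Col i := ((Col i).orderIsoOfFin (hC.1 i) s).2
    have hdiff : ∑ j, colorContribution hC.1 x j t - ∑ j, colorContribution hC.1 y j t =
        colorContribution hC.1 x i t - colorContribution hC.1 y i t := by
      rw [← sum_sub_distrib]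
      refine sum_eq_single i (fun j _ hji => ?_) (fun h => absurd (mem_univ i) h)
      rw [colorContribution_eq_of_agree_on_K hC hside hji hti, sub_self]
    rw [henc t hti, sub_self, eq_comm, sub_eq_zero, colorContribution_orderIsoOfFin,
      colorContribution_orderIsoOfFin] at hdiff
    exact hdiff

variable (A) in
theorem betaStar_one_le_div (hb : 0 < b)
    (hC : IsABColoring G a b Col) : betaStar A G 1 ≤ (a : ℝ) / b := by
  refine csInf_le ⟨0, ?_⟩ ⟨b, a, hb, fractionalColoringCode A hC, fun i => ?_, rfl⟩
  · rintro β ⟨m, ℓ, -, -, -, rfl⟩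
    positivity
  · simp [fractionalColoringCode, hC.1 i]

end FractionalColoring

theorem fractional_coloring_achievability_general {N : ℕ} (G : IndexProblem N) (A : Type*)
    [AddCommGroup A] :
    (∀ (a b : ℕ) (Col : Fin N → Finset (Fin a)), 0 < b → IsABColoring G a b Col →
      ∃ C : IndexCode N G A b a, ∀ i, (C.R i).card ≤ b) ∧
    betaStar A G 1 ≤ fracChrom G := by
  refine ⟨fun a b Col _ hC => ⟨fractionalColoringCode A hC, fun i => (hC.1 i).le⟩, ?_⟩
  refine le_csInf ⟨N, N, 1, _, one_pos, isABColoring_singleton G, by simp⟩ ?_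
  rintro q ⟨a, b, Col, hb, hC, rfl⟩
  exact betaStar_one_le_div A hb hC

/-- for any `a:b` coloring of the interference graph, the fractional-coloring
scheme gives a valid index code with message length `b`, codeword length `a` (broadcast rate
`a/b`) and locality `1`; hence `β_G^*(1) ≤ χ_f(Ḡ_u)`. -/
theorem fractional_coloring_achievability {N : ℕ} (G : IndexProblem N) (A : Type*)
    [Fintype A] [DecidableEq A] [AddCommGroup A] (hA : 1 < Fintype.card A) :
    (∀ (a b : ℕ) (Col : Fin N → Finset (Fin a)), 0 < b → IsABColoring G a b Col →
      ∃ C : IndexCode N G A b a, ∀ i, (C.R i).card ≤ b) ∧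
    betaStar A G 1 ≤ fracChrom G :=
  fractional_coloring_achievability_general G A
end

section
/- For any unicast index coding problem G, the optimal broadcast rate at locality r = 1 equals the fractional chromatic number of the interference graph: β_G*(1) = χ_f(Ḡ_u). -/
open Finset

set_option linter.unusedSectionVars false

section Aux

variable {N : ℕ} {A : Type*} [Fintype A] [DecidableEq A] [AddCommGroup A]

/-- Achievability: an `a:b` coloring yields an index code with `m = b`, `ℓ = a`. -/
noncomputable def codeOfColoring (G : IndexProblem N) {a b : ℕ}
    (C : Fin N → Finset (Fin a)) (h : IsABColoring G a b C) :
    IndexCode N G A b a where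
  enc x t := ∑ j : Fin N,
    if hj : t ∈ C j then x j ((C j).equivFinOfCardEq (h.1 j) ⟨t, hj⟩) else 0
  R := C
  valid := by
    intro i x y henc hside
    have key : ∀ ts : ↥(C i),
        x i ((C i).equivFinOfCardEq (h.1 i) ts) = y i ((C i).equivFinOfCardEq (h.1 i) ts) := by
      rintro ⟨t, ht⟩
      have hsum : ∑ j : Fin N,
          ((if hj : t ∈ C j then x j ((C j).equivFinOfCardEq (h.1 j) ⟨t, hj⟩) else 0)
          - (if hj : t ∈ C j then y j ((C j).equivFinOfCardEq (h.1 j) ⟨t, hj⟩) else 0)) = 0 := by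
        rw [Finset.sum_sub_distrib, sub_eq_zero]
        exact henc t ht
      rw [Finset.sum_eq_single_of_mem i (Finset.mem_univ i)] at hsum
      · rw [dif_pos ht, dif_pos ht, sub_eq_zero] at hsum
        exact hsum
      · intro j _ hji
        by_cases hj : t ∈ C j
        · have hnd : ¬ Disjoint (C i) (C j) := Finset.not_disjoint_iff.mpr ⟨t, ht, hj⟩
          have hk : j ∈ G.K i := by
            by_contra hk
            exact hnd (h.2 i j (fun he => hji he.symm) (Or.inr hk))
          rw [dif_pos hj, dif_pos hj, hside j hk, sub_self]
        · rw [dif_neg hj, dif_neg hj, sub_self]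
    funext k
    have := key (((C i).equivFinOfCardEq (h.1 i)).symm k)
    rwa [Equiv.apply_symm_apply] at this

variable {G : IndexProblem N} {m ℓ : ℕ}

lemma inj_update (Cd : IndexCode N G A m ℓ) (i : Fin N) (x : Fin N → Fin m → A) :
    Function.Injective
      (fun v : Fin m → A => fun t : ↥(Cd.R i) => Cd.enc (Function.update x i v) t.1) := by
  intro v w hvw
  have := Cd.valid i (Function.update x i v) (Function.update x i w)
    (fun t ht => congrFun hvw ⟨t, ht⟩)
    (fun j hj => by
      have hji : j ≠ i := fun h => G.not_self i (h ▸ hj)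
      rw [Function.update_of_ne hji, Function.update_of_ne hji])
  simpa using this

lemma card_R_eq (hA : 1 < Fintype.card A) (Cd : IndexCode N G A m ℓ)
    (hloc : ∀ i, (Cd.R i).card ≤ m) (i : Fin N) : (Cd.R i).card = m := by
  refine le_antisymm (hloc i) ?_
  have h1 := Fintype.card_le_of_injective _ (inj_update Cd i 0)
  simp only [Fintype.card_fun, Fintype.card_fin, Fintype.card_coe] at h1
  exact (Nat.pow_le_pow_iff_right hA).mp h1

lemma bij_update (hA : 1 < Fintype.card A) (Cd : IndexCode N G A m ℓ)
    (hloc : ∀ i, (Cd.R i).card ≤ m) (i : Fin N) (x : Fin N → Fin m → A) :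
    Function.Bijective
      (fun v : Fin m → A => fun t : ↥(Cd.R i) => Cd.enc (Function.update x i v) t.1) := by
  rw [Fintype.bijective_iff_injective_and_card]
  refine ⟨inj_update Cd i x, ?_⟩
  simp [Fintype.card_fun, card_R_eq hA Cd hloc i]

lemma enc_indep_s7 (hA : 1 < Fintype.card A) (Cd : IndexCode N G A m ℓ)
    (hloc : ∀ i, (Cd.R i).card ≤ m) {i j : Fin N} (hne : i ≠ j) (hij : j ∉ G.K i)
    (x : Fin N → Fin m → A) (w : Fin m → A) {t : Fin ℓ} (ht : t ∈ Cd.R i) :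
    Cd.enc (Function.update x j w) t = Cd.enc x t := by
  obtain ⟨v, hv⟩ := (bij_update hA Cd hloc i x).2
    (fun t : ↥(Cd.R i) => Cd.enc (Function.update x j w) t.1)
  have hxv : v = x i := by
    have := Cd.valid i (Function.update x i v) (Function.update x j w)
      (fun s hs => congrFun hv ⟨s, hs⟩)
      (fun k hk => by
        have hki : k ≠ i := fun h => G.not_self i (h ▸ hk)
        have hkj : k ≠ j := fun h => hij (h ▸ hk)
        rw [Function.update_of_ne hki, Function.update_of_ne hkj])
    rwa [Function.update_self, Function.update_of_ne hne] at this
  have h2 := congrFun hv ⟨t, ht⟩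
  simp only [hxv, Function.update_eq_self] at h2
  exact h2.symm

lemma disj_aux (hA : 1 < Fintype.card A) (hm : 0 < m) (Cd : IndexCode N G A m ℓ)
    (hloc : ∀ i, (Cd.R i).card ≤ m) {i j : Fin N} (hne : i ≠ j) (hij : j ∉ G.K i) :
    Disjoint (Cd.R i) (Cd.R j) := by
  rw [Finset.disjoint_left]
  by_contra hcon
  push_neg at hcon
  obtain ⟨t, hti, htj⟩ := hcon
  have hinj : Function.Injective (fun w : Fin m → A =>
      fun s : ↥((Cd.R j).erase t) => Cd.enc (Function.update 0 j w) s.1) := by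
    intro w w' hww
    have hval := Cd.valid j (Function.update 0 j w) (Function.update 0 j w')
      (fun s hs => by
        by_cases hst : s = t
        · subst hst
          rw [enc_indep_s7 hA Cd hloc hne hij 0 w hti, enc_indep_s7 hA Cd hloc hne hij 0 w' hti]
        · exact congrFun hww ⟨s, Finset.mem_erase.mpr ⟨hst, hs⟩⟩)
      (fun k hk => by
        have hkj : k ≠ j := fun h => G.not_self j (h ▸ hk)
        rw [Function.update_of_ne hkj, Function.update_of_ne hkj])
    simpa using hval
  have hcard := Fintype.card_le_of_injective _ hinj
  simp only [Fintype.card_fun, Fintype.card_fin, Fintype.card_coe] at hcard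
  rw [Finset.card_erase_of_mem htj, card_R_eq hA Cd hloc j] at hcard
  have := (Nat.pow_le_pow_iff_right hA).mp hcard
  omega

end Aux

/-- for any unicast index coding problem `G`, the optimal broadcast rate at
locality `r = 1` equals the fractional chromatic number of the interference graph:
`β_G^*(1) = χ_f(Ḡ_u)`. -/


theorem betaStar_one_eq_fracChrom {N : ℕ} (G : IndexProblem N) (A : Type*)
    [Fintype A] [DecidableEq A] [AddCommGroup A] (hA : 1 < Fintype.card A) :
    betaStar A G 1 = fracChrom G := by
  unfold betaStar fracChrom
  congr 1
  ext q
  constructor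
  · rintro ⟨m, ℓ, hm, Cd, hloc, rfl⟩
    have hloc' : ∀ i, (Cd.R i).card ≤ m := by
      intro i
      have h := hloc i
      rw [one_mul] at h
      exact_mod_cast h
    refine ⟨ℓ, m, Cd.R, hm, ⟨fun i => card_R_eq hA Cd hloc' i, ?_⟩, rfl⟩
    intro i j hne hedge
    rcases hedge with h | h
    · exact (disj_aux hA hm Cd hloc' hne.symm h).symm
    · exact disj_aux hA hm Cd hloc' hne h
  · rintro ⟨a, b, C, hb, hcol, rfl⟩
    refine ⟨b, a, hb, codeOfColoring G C hcol, fun i => ?_, rfl⟩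
    have : ((codeOfColoring G C hcol : IndexCode N G A b a).R i).card = b := hcol.1 i
    rw [this, one_mul]
end

section
/- A matrix B ∈ F_q^{N×ℓ} is a valid scalar linear encoding matrix for a unicast index coding problem G if and only if there exists a matrix A ∈ F_q^{N×N} that fits G (A_{i,i} = 1 for all i, and A_{j,i} = 0 whenever i ≠ j and j ∉ K_i) whose column space is contained in the column space of B. -/
open Finset

/-- A matrix `A` fits the side information graph `G` if its diagonal entries are `1`
and `A j i = 0` for all `i ≠ j` with `j ∉ K i`. -/
def Fits {N : ℕ} {F : Type*} [Field F] (G : IndexProblem N)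
    (A : Matrix (Fin N) (Fin N) F) : Prop :=
  (∀ i, A i i = 1) ∧ ∀ i j, j ≠ i → j ∉ G.K i → A j i = 0

/-- `B` is a valid scalar linear encoding matrix for `G`: every receiver `i` can recover
`x i` from the codeword `c = x B` and its side information `(x j, j ∈ K i)`. -/
def IsValidEncMatrix {N ℓ : ℕ} {F : Type*} [Field F] (G : IndexProblem N)
    (B : Matrix (Fin N) (Fin ℓ) F) : Prop :=
  ∀ (i : Fin N) (x y : Fin N → F),
    Matrix.vecMul x B = Matrix.vecMul y B → (∀ j ∈ G.K i, x j = y j) → x i = y i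

/-- The column space of a matrix, i.e. the span of its columns. -/
def colSpace {n ℓ : ℕ} {F : Type*} [Field F] (B : Matrix (Fin n) (Fin ℓ) F) :
    Submodule F (Fin n → F) :=
  Submodule.span F (Set.range B.transpose)

/-!
Subtracting two messages with the same codeword, `B` is valid iff for every receiver `i`,
each `z` with `z B = 0` that vanishes on `K i` also vanishes at `i`. Such `z` are exactly the
functionals annihilating `colSpace B + span {e_j | j ∈ K i}`, so by double-annihilator duality
this says `e_i ∈ colSpace B + span {e_j | j ∈ K i}`. Equivalently, `colSpace B` contains a
vector `a` with `a i = 1` supported on `K i ∪ {i}`; such vectors are the columns of a fitting `A`.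
-/

open Matrix

section SingleMemSupSpanSubset

variable {ι : Type*} [Fintype ι] [DecidableEq ι]

theorem forall_mem_spanSubset_dotProduct_eq_zero_iff {R : Type*} [CommSemiring R]
    (S : Set ι) (z : ι → R) :
    (∀ s ∈ Pi.spanSubset R S, z ⬝ᵥ s = 0) ↔ ∀ j ∈ S, z j = 0 := by
  refine ⟨fun h j hj => ?_, fun h s hs => Finset.sum_eq_zero fun j _ => ?_⟩
  · rw [← dotProduct_single_one z j]
    refine h _ (Pi.mem_spanSubset_iff.mpr fun k hk => Pi.single_eq_of_ne ?_ _)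
    rintro rfl
    exact hk hj
  · by_cases hj : j ∈ S
    · rw [h j hj, zero_mul]
    · rw [Pi.mem_spanSubset_iff.mp hs j hj, mul_zero]

theorem single_mem_sup_spanSubset_iff_forall_dotProduct {F : Type*} [Field F]
    (W : Submodule F (ι → F)) (S : Set ι) (i : ι) :
    Pi.single i 1 ∈ W ⊔ Pi.spanSubset F S ↔
      ∀ z : ι → F, (∀ w ∈ W, z ⬝ᵥ w = 0) → (∀ j ∈ S, z j = 0) → z i = 0 := by
  rw [← Subspace.forall_mem_dualAnnihilator_apply_eq_zero_iff,
    (dotProductEquiv F ι).toEquiv.symm.forall_congr_left]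
  refine forall_congr' fun z => ?_
  simp only [Submodule.dualAnnihilator_sup_eq, Submodule.mem_inf, Submodule.mem_dualAnnihilator,
    Equiv.symm_symm, LinearEquiv.coe_toEquiv, dotProductEquiv_apply_apply, dotProduct_single_one,
    forall_mem_spanSubset_dotProduct_eq_zero_iff, and_imp]

theorem single_mem_sup_spanSubset_iff_exists {R : Type*} [CommRing R]
    (W : Submodule R (ι → R)) {S : Set ι} {i : ι} (hi : i ∉ S) :
    Pi.single i 1 ∈ W ⊔ Pi.spanSubset R S ↔
      ∃ a ∈ W, a i = 1 ∧ ∀ j, j ≠ i → j ∉ S → a j = 0 := by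
  simp only [Submodule.mem_sup, Pi.mem_spanSubset_iff]
  constructor
  · rintro ⟨a, ha, s, hs, has⟩
    refine ⟨a, ha, ?_, fun j hji hj => ?_⟩
    · simpa [hs i hi] using congr_fun has i
    · simpa [hs j hj, hji] using congr_fun has j
  · rintro ⟨a, ha, hai, haS⟩
    refine ⟨a, ha, Pi.single i 1 - a, fun j hj => ?_, add_sub_cancel _ _⟩
    obtain rfl | hji := eq_or_ne j i
    · simp [hai]
    · simp [haS j hji hj, hji]

end SingleMemSupSpanSubset

theorem vecMul_eq_zero_iff_forall_mem_colSpace {n ℓ : ℕ} {F : Type*} [Field F]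
    (B : Matrix (Fin n) (Fin ℓ) F) (z : Fin n → F) :
    vecMul z B = 0 ↔ ∀ w ∈ colSpace B, z ⬝ᵥ w = 0 := by
  refine ⟨fun h w hw => ?_, fun h => funext fun t => h _ (Submodule.subset_span ⟨t, rfl⟩)⟩
  have hker : colSpace B ≤ LinearMap.ker (dotProductEquiv F _ z) := by
    refine Submodule.span_le.mpr ?_
    rintro _ ⟨t, rfl⟩
    exact congr_fun h t
  exact hker hw

theorem isValidEncMatrix_iff_forall_vecMul_eq_zero {N ℓ : ℕ} {F : Type*} [Field F]
    (G : IndexProblem N) (B : Matrix (Fin N) (Fin ℓ) F) :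
    IsValidEncMatrix G B ↔
      ∀ i (z : Fin N → F), vecMul z B = 0 → (∀ j ∈ G.K i, z j = 0) → z i = 0 := by
  refine ⟨fun h i z hz hK => h i z 0 (by rw [hz, zero_vecMul]) hK, fun h i x y hxy hK => ?_⟩
  rw [← sub_eq_zero] at hxy ⊢
  exact h i (x - y) (by rwa [sub_vecMul]) fun j hj => sub_eq_zero.mpr (hK j hj)

theorem exists_fits_colSpace_le_iff {N : ℕ} {F : Type*} [Field F] (G : IndexProblem N)
    (W : Submodule F (Fin N → F)) :
    (∃ A : Matrix (Fin N) (Fin N) F, Fits G A ∧ colSpace A ≤ W) ↔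
      ∀ i, ∃ a ∈ W, a i = 1 ∧ ∀ j, j ≠ i → j ∉ G.K i → a j = 0 := by
  constructor
  · rintro ⟨A, ⟨hdiag, hoff⟩, hle⟩ i
    exact ⟨Aᵀ i, hle (Submodule.subset_span ⟨i, rfl⟩), hdiag i, hoff i⟩
  · intro h
    choose a ha hdiag hoff using h
    refine ⟨(Matrix.of a)ᵀ, ⟨hdiag, hoff⟩, Submodule.span_le.mpr ?_⟩
    rintro _ ⟨i, rfl⟩
    exact ha i

/-- `B ∈ F^{N×ℓ}` is a valid scalar linear encoding matrix for `G` iff there is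
a matrix `A` fitting `G` whose column space is contained in the column space of `B`. -/
theorem valid_scalar_linear_iff_fits {N ℓ : ℕ} {F : Type*} [Field F]
    (G : IndexProblem N) (B : Matrix (Fin N) (Fin ℓ) F) :
    IsValidEncMatrix G B ↔
      ∃ A : Matrix (Fin N) (Fin N) F, Fits G A ∧ colSpace A ≤ colSpace B := by
  rw [isValidEncMatrix_iff_forall_vecMul_eq_zero, exists_fits_colSpace_le_iff]
  refine forall_congr' fun i => ?_
  have hi : i ∉ (G.K i : Set (Fin N)) := G.not_self i
  simpa only [vecMul_eq_zero_iff_forall_mem_colSpace, Finset.mem_coe] using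
    (single_mem_sup_spanSubset_iff_forall_dotProduct (colSpace B) _ i).symm.trans
      (single_mem_sup_spanSubset_iff_exists (colSpace B) hi)
end

section
/- Let S ⊂ [N] be a subset of vertices of the side information graph G such that the induced subgraph G_S is a directed acyclic graph. If A ∈ F_q^{N×N} fits G, then the columns of A indexed by S are linearly independent. -/
open Finset

/-- There is a (nonempty) closed directed walk inside the vertex set `S`, where the edges of
the side information graph are `(i, j)` with `j ∈ K i`.  Its absence is equivalent to the
induced subgraph `G_S` being a directed acyclic graph. -/
def HasDirCycleIn {N : ℕ} (K : Fin N → Finset (Fin N)) (S : Finset (Fin N)) : Prop :=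
  ∃ (n : ℕ) (v : ℕ → Fin N), 0 < n ∧ (∀ k ≤ n, v k ∈ S) ∧
    (∀ k < n, v (k + 1) ∈ K (v k)) ∧ v n = v 0

/-- if the subgraph of `G` induced by `S` is acyclic and `A` fits `G`, then
the columns of `A` indexed by `S` are linearly independent. -/
theorem fits_acyclic_columns_linearIndependent {N : ℕ} {F : Type*} [Field F]
    (G : IndexProblem N) (S : Finset (Fin N)) (hS : ¬ HasDirCycleIn G.K S)
    (A : Matrix (Fin N) (Fin N) F) (hA : Fits G A) :
    LinearIndependent F (fun i : {i // i ∈ S} => A.transpose (i : Fin N)) := by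
  rw [Fintype.linearIndependent_iff]
  intro g hg
  by_contra hne
  push_neg at hne
  obtain ⟨i0, hi0⟩ := hne
  by_cases hall : ∀ i : {i // i ∈ S}, g i ≠ 0 →
      ∃ j : {i // i ∈ S}, g j ≠ 0 ∧ (i : Fin N) ∈ G.K (j : Fin N)
  · choose f hf1 hf2 using hall
    let w : ℕ → {p : {i // i ∈ S} // g p ≠ 0} :=
      fun n => Nat.rec ⟨i0, hi0⟩ (fun _ p => ⟨f p.1 p.2, hf1 p.1 p.2⟩) n
    have hw : ∀ n, ((w n).1 : Fin N) ∈ G.K ((w (n+1)).1 : Fin N) := by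
      intro n
      have hrec : w (n+1) = ⟨f (w n).1 (w n).2, hf1 (w n).1 (w n).2⟩ := rfl
      rw [hrec]
      exact hf2 (w n).1 (w n).2
    have key : ∀ a b : ℕ, a < b → w a = w b → False := by
      intro a b hab heq
      apply hS
      refine ⟨b - a, fun k => ((w (b - k)).1 : Fin N), by omega, ?_, ?_, ?_⟩
      · intro k _; exact (w (b - k)).1.2
      · intro k hk
        simp only []
        have h1 : b - k = (b - (k + 1)) + 1 := by omega
        rw [h1]
        exact hw (b - (k + 1))
      · simp only []
        have h2 : b - (b - a) = a := by omega
        rw [h2, Nat.sub_zero, heq]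
    obtain ⟨a, b, hab, heq⟩ := Finite.exists_ne_map_eq_of_infinite w
    rcases lt_or_gt_of_ne hab with h | h
    · exact key a b h heq
    · exact key b a h heq.symm
  · push_neg at hall
    obtain ⟨i, hgi, hi⟩ := hall
    have h0 : ∑ j : {i // i ∈ S}, g j * A (i : Fin N) (j : Fin N) = 0 := by
      have := congrFun hg (i : Fin N)
      simpa [Finset.sum_apply, Matrix.transpose_apply] using this
    rw [Finset.sum_eq_single i] at h0
    · rw [hA.1, mul_one] at h0
      exact hgi h0
    · intro j _ hji
      rcases eq_or_ne (g j) 0 with hz | hz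
      · rw [hz, zero_mul]
      · have hne' : (i : Fin N) ≠ (j : Fin N) := fun h => hji (Subtype.ext h).symm
        rw [hA.2 (j : Fin N) (i : Fin N) hne' (hi j hz), mul_zero]
    · intro h; exact absurd (Finset.mem_univ i) h
end

section
/- If there exists a Q-fold acyclic induced subgraph cover of G consisting of M subsets, and a valid scalar linear index code of length ℓ for G, then there exists a vector linear index code for G with message length M, broadcast rate ℓ, and locality at most (Q + (M−Q)ℓ)/M; hence β_G*((Q + (M−Q)ℓ)/M) ≤ ℓ. -/
/-!
Validity of `B` puts each unit vector `e_i` into the column space of `B` plus the coordinate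
span of `K i`; this yields a matrix `A` fitting `G` whose columns lie in the column space of `B`,
and receiver `i` decodes `x i` from `x ⬝ᵥ Aᵀ i` and its side information.
On an acyclic set `S` the columns `Aᵀ i`, `i ∈ S`, are linearly independent (a dependency
gives every vertex of its support a predecessor in the support, hence a cycle), so they extend
to at most `ℓ` vectors spanning the column space of `B`. Encoding the `j`-th coordinates of the
messages with such vectors for `S_j`, receiver `i` reads one symbol of block `j` if `i ∈ S_j`
and all `ℓ` symbols otherwise: at most `Q + (M - Q)ℓ` symbols for `M` message symbols.
-/

open Finset

open Matrix

theorem Function.exists_isPeriodicPt_of_finite {α : Type*} [Finite α] [Nonempty α]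
    (f : α → α) : ∃ x n, 0 < n ∧ Function.IsPeriodicPt f n x := by
  obtain ⟨p, q, hne, heq⟩ :=
    Finite.exists_ne_map_eq_of_infinite fun n => f^[n] (Classical.arbitrary α)
  wlog hpq : p < q generalizing p q
  · exact this q p hne.symm heq.symm (by omega)
  refine ⟨f^[p] (Classical.arbitrary α), q - p, by omega, ?_⟩
  rw [Function.IsPeriodicPt, Function.IsFixedPt, ← Function.iterate_add_apply,
    Nat.sub_add_cancel hpq.le]
  exact heq.symm

section IndexCoding

variable {N : ℕ} {F : Type*} [Field F]

theorem hasDirCycleIn_of_forall_exists_pred {K : Fin N → Finset (Fin N)} {S : Finset (Fin N)}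
    {T : Set (Fin N)} (hTS : T ⊆ S) (hT : T.Nonempty) (hpred : ∀ i ∈ T, ∃ i' ∈ T, i ∈ K i') :
    HasDirCycleIn K S := by
  choose pred hpredT hpredK using hpred
  have : Nonempty T := hT.to_subtype
  set f : T → T := fun i => ⟨pred i i.2, hpredT i i.2⟩
  obtain ⟨x, n, hn, hx⟩ := Function.exists_isPeriodicPt_of_finite f
  -- walk the periodic orbit backwards, since each step goes to a predecessor
  refine ⟨n, fun k => f^[n - k] x, hn, fun k _ => hTS (Subtype.mem _), fun k hk => ?_,
    by simp [hx.eq]⟩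
  dsimp only
  rw [show n - k = n - (k + 1) + 1 by omega, Function.iterate_succ_apply']
  exact hpredK _ _

theorem Fits.eq_of_dotProduct_eq {G : IndexProblem N} {A : Matrix (Fin N) (Fin N) F}
    (hA : Fits G A) {i : Fin N} {x y : Fin N → F} (h : x ⬝ᵥ Aᵀ i = y ⬝ᵥ Aᵀ i)
    (hside : ∀ j ∈ G.K i, x j = y j) : x i = y i := by
  have hsupp : ∀ z : Fin N → F, (∀ j ∈ G.K i, z j = 0) → z ⬝ᵥ Aᵀ i = z i := by
    intro z hz
    rw [dotProduct, Finset.sum_eq_single i _ (by simp)]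
    · simp [hA.1 i]
    · intro j _ hji
      by_cases hj : j ∈ G.K i
      · simp [hz j hj]
      · simp [hA.2 i j hji hj]
  rw [← sub_eq_zero, ← Pi.sub_apply, ← hsupp (x - y) fun j hj => sub_eq_zero.2 (hside j hj),
    sub_dotProduct, h, sub_self]

theorem Fits.linearIndependent_of_not_hasDirCycleIn {G : IndexProblem N}
    {A : Matrix (Fin N) (Fin N) F} (hA : Fits G A) {S : Finset (Fin N)}
    (hS : ¬ HasDirCycleIn G.K S) : LinearIndependent F fun i : S => Aᵀ i := by
  rw [Fintype.linearIndependent_iff]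
  intro g hg
  by_contra! hsupp
  apply hS
  -- the `i`-th coordinate of the relation forces a predecessor of `i` in the support of `g`
  refine hasDirCycleIn_of_forall_exists_pred (T := Subtype.val '' {i | g i ≠ 0})
    (by rintro _ ⟨i, -, rfl⟩; exact i.2) (by simpa [Set.Nonempty] using hsupp) ?_
  rintro _ ⟨i, hgi, rfl⟩
  by_contra! hnone
  have hcoord : ∑ i', g i' * A i i' = 0 := by simpa using congrFun hg i
  rw [Finset.sum_eq_single i _ (by simp), hA.1, mul_one] at hcoord
  · exact hgi hcoord
  intro i' _ hi'
  by_cases hgi' : g i' = 0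
  · simp [hgi']
  · rw [hA.2 i' i (Subtype.coe_injective.ne hi'.symm) (hnone _ ⟨i', hgi', rfl⟩), mul_zero]

theorem dotProduct_eq_of_mem_span {ι : Type*} [Fintype ι] [DecidableEq ι] {s : Set (ι → F)}
    {x y v : ι → F} (h : ∀ w ∈ s, x ⬝ᵥ w = y ⬝ᵥ w) (hv : v ∈ Submodule.span F s) :
    x ⬝ᵥ v = y ⬝ᵥ v :=
  LinearMap.eqOn_span' (f := dotProductEquiv F ι x) (g := dotProductEquiv F ι y) h hv

theorem IsValidEncMatrix.single_mem_colSpace_sup {ℓ : ℕ} {G : IndexProblem N}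
    {B : Matrix (Fin N) (Fin ℓ) F} (hB : IsValidEncMatrix G B) (i : Fin N) :
    Pi.single i 1 ∈ colSpace B ⊔ Submodule.pi (↑(G.K i))ᶜ fun _ => ⊥ := by
  by_contra hi
  obtain ⟨f, hfi, hf⟩ := Submodule.exists_dual_map_eq_bot_of_notMem hi inferInstance
  set z := (dotProductEquiv F (Fin N)).symm f
  have hz : ∀ v, f v = z ⬝ᵥ v := fun v =>
    LinearMap.congr_fun ((dotProductEquiv F (Fin N)).apply_symm_apply f).symm v
  have hvanish : ∀ v ∈ colSpace B ⊔ Submodule.pi (↑(G.K i))ᶜ fun _ => ⊥, z ⬝ᵥ v = 0 :=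
    fun v hv => by rw [← hz]; exact LinearMap.le_ker_iff_map.2 hf hv
  refine hfi ?_
  rw [hz, dotProduct_single, mul_one]
  refine hB i z 0 (funext fun t => ?_) fun j hj => ?_
  · rw [Matrix.zero_vecMul, Pi.zero_apply, ← hvanish (Bᵀ t)
      (Submodule.mem_sup_left (Submodule.subset_span ⟨t, rfl⟩))]
    rfl
  · rw [← mul_one (z j), ← dotProduct_single, Pi.zero_apply]
    refine hvanish _ (Submodule.mem_sup_right ?_)
    simp only [Submodule.mem_pi, Set.mem_compl_iff, Finset.mem_coe, Submodule.mem_bot]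
    intro j' hj'
    exact Pi.single_eq_of_ne (by rintro rfl; exact hj' hj) 1

theorem IsValidEncMatrix.exists_fits {ℓ : ℕ} {G : IndexProblem N}
    {B : Matrix (Fin N) (Fin ℓ) F} (hB : IsValidEncMatrix G B) :
    ∃ A : Matrix (Fin N) (Fin N) F, Fits G A ∧ ∀ i, Aᵀ i ∈ colSpace B := by
  choose w hw v hv hwv using fun i => Submodule.mem_sup.1 (hB.single_mem_colSpace_sup i)
  have hv0 : ∀ i j, j ∉ G.K i → v i j = 0 := fun i j hj => by
    simpa using (Submodule.mem_pi.1 (hv i)) j hj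
  have hw' : ∀ i, w i = Pi.single i 1 - v i := fun i => eq_sub_of_add_eq (hwv i)
  refine ⟨(Matrix.of w)ᵀ, ⟨fun i => ?_, fun i j hji hj => ?_⟩, hw⟩
  · simp [hw', hv0 i i (G.not_self i)]
  · simp [hw', hv0 i j hj, Pi.single_eq_of_ne hji]

theorem exists_fin_family_superset_spanning {V : Type*} [AddCommGroup V] [Module F V]
    [FiniteDimensional F V] {W : Submodule F V} {ℓ : ℕ} (hW : Module.finrank F W ≤ ℓ)
    {ι : Type*} {v : ι → V} (hv : LinearIndependent F v) (hvW : ∀ i, v i ∈ W) :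
    ∃ col : Fin ℓ → V, Set.range v ⊆ Set.range col ∧ W ≤ Submodule.span F (Set.range col) := by
  have hs : LinearIndepOn F id (Set.range v) := (linearIndepOn_id_range_iff hv.injective).2 hv
  have hsW : Set.range v ⊆ W := Set.range_subset_iff.2 hvW
  set b := hs.extend hsW
  have hb : LinearIndependent F ((↑) : b → V) := (hs.linearIndepOn_extend hsW).linearIndependent
  have : Fintype b := @Fintype.ofFinite _ hb.finite
  have hcard : Fintype.card b ≤ ℓ := calc
    Fintype.card b = Set.finrank F (Set.range ((↑) : b → V)) :=
      linearIndependent_iff_card_eq_finrank_span.1 hb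
    _ ≤ Module.finrank F W := Submodule.finrank_mono <| Submodule.span_le.2 <| by
      simpa using hs.extend_subset hsW
    _ ≤ ℓ := hW
  obtain ⟨e⟩ : Nonempty (b ↪ Fin ℓ) :=
    Function.Embedding.nonempty_of_card_le (by rwa [Fintype.card_fin])
  have hbcol : b ⊆ Set.range (Function.extend e (↑) 0) :=
    fun x hx => ⟨e ⟨x, hx⟩, e.injective.extend_apply _ _ _⟩
  exact ⟨_, (hs.subset_extend hsW).trans hbcol,
    (hs.subset_span_extend hsW).trans (Submodule.span_mono hbcol)⟩

theorem Fits.exists_cols_of_not_hasDirCycleIn {ℓ : ℕ} {G : IndexProblem N}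
    {A : Matrix (Fin N) (Fin N) F} (hA : Fits G A) {B : Matrix (Fin N) (Fin ℓ) F}
    (hAB : ∀ i, Aᵀ i ∈ colSpace B) {S : Finset (Fin N)} (hS : ¬ HasDirCycleIn G.K S) :
    ∃ col : Fin ℓ → Fin N → F, (∀ i ∈ S, Aᵀ i ∈ Set.range col) ∧
      ∀ i, Aᵀ i ∈ Submodule.span F (Set.range col) := by
  have hrank : Module.finrank F (colSpace B) ≤ ℓ :=
    (finrank_range_le_card (R := F) (M := Fin N → F) Bᵀ).trans_eq (Fintype.card_fin ℓ)
  obtain ⟨col, hcol, hspan⟩ := exists_fin_family_superset_spanning hrank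
    (hA.linearIndependent_of_not_hasDirCycleIn hS) fun i => hAB i
  exact ⟨col, fun i hi => hcol ⟨⟨i, hi⟩, rfl⟩, fun i => hspan (hAB i)⟩

def blockEquiv (M ℓ : ℕ) : (Σ _ : Fin M, Fin ℓ) ≃ Fin (M * ℓ) :=
  (Equiv.sigmaEquivProd _ _).trans finProdFinEquiv

/-- Block `j` encodes the `j`-th message instance with the columns `col j` (the code `B_j`);
receiver `i` queries the symbols `T i j` of block `j`. -/
def blockCode {M ℓ : ℕ} {G : IndexProblem N} {A : Matrix (Fin N) (Fin N) F} (hA : Fits G A)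
    (col : Fin M → Fin ℓ → Fin N → F) (T : Fin N → Fin M → Finset (Fin ℓ))
    (hT : ∀ i j, Aᵀ i ∈ Submodule.span F (col j '' T i j)) : IndexCode N G F M (M * ℓ) where
  enc x c := let p := (blockEquiv M ℓ).symm c; (fun n => x n p.1) ⬝ᵥ col p.1 p.2
  R i := (Finset.univ.sigma (T i)).map (blockEquiv M ℓ).toEmbedding
  valid i x y hq hside := funext fun j => hA.eq_of_dotProduct_eq
    (dotProduct_eq_of_mem_span (by
      rintro _ ⟨t, ht, rfl⟩
      simpa using hq (blockEquiv M ℓ ⟨j, t⟩) (Finset.mem_map_of_mem _ (by simpa using ht)))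
      (hT i j))
    fun n hn => congrFun (hside n hn) j

theorem card_blockCode_R {M ℓ : ℕ} {G : IndexProblem N} {A : Matrix (Fin N) (Fin N) F}
    (hA : Fits G A) (col : Fin M → Fin ℓ → Fin N → F) (T : Fin N → Fin M → Finset (Fin ℓ))
    (hT : ∀ i j, Aᵀ i ∈ Submodule.span F (col j '' T i j)) (i : Fin N) :
    ((blockCode hA col T hT).R i).card = ∑ j, (T i j).card := by
  simp [blockCode]

theorem sum_ite_one_le {ι : Type*} [Fintype ι] (p : ι → Prop) [DecidablePred p] {Q ℓ : ℕ}
    (hQ : Q ≤ (Finset.univ.filter p).card) (hℓ : 1 ≤ ℓ) :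
    ((∑ j, if p j then 1 else ℓ : ℕ) : ℝ) ≤ Q + (Fintype.card ι - Q) * ℓ := by
  have hsplit := Finset.card_filter_add_card_filter_not (s := Finset.univ) p
  rw [Finset.sum_ite, Finset.sum_const, Finset.sum_const, smul_eq_mul, smul_eq_mul, mul_one,
    ← Finset.card_univ, ← hsplit]
  have hQ' : (Q : ℝ) ≤ (Finset.univ.filter p).card := by exact_mod_cast hQ
  have hℓ' : (1 : ℝ) ≤ ℓ := by exact_mod_cast hℓ
  push_cast
  nlinarith [mul_nonneg (sub_nonneg.2 hQ') (sub_nonneg.2 hℓ')]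

theorem exists_indexCode_of_aisCover {M Q ℓ : ℕ} {G : IndexProblem N}
    (S : Fin M → Finset (Fin N)) (hcover : ∀ i : Fin N, ∃ j, i ∈ S j)
    (hQ : ∀ i : Fin N, Q ≤ (Finset.univ.filter fun j => i ∈ S j).card)
    (hacyc : ∀ j, ¬ HasDirCycleIn G.K (S j)) {B : Matrix (Fin N) (Fin ℓ) F}
    (hB : IsValidEncMatrix G B) :
    ∃ C : IndexCode N G F M (M * ℓ), ∀ i, ((C.R i).card : ℝ) ≤ (Q : ℝ) + ((M : ℝ) - Q) * ℓ := by
  classical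
  obtain ⟨A, hA, hAB⟩ := hB.exists_fits
  choose col hcolS hcolspan using fun j => hA.exists_cols_of_not_hasDirCycleIn hAB (hacyc j)
  choose t ht using hcolS
  let T i j := if h : i ∈ S j then {t j i h} else Finset.univ
  have hT : ∀ i j, Aᵀ i ∈ Submodule.span F (col j '' T i j) := by
    intro i j
    by_cases h : i ∈ S j
    · simp [T, h, ht, Submodule.mem_span_singleton_self]
    · simpa [T, h] using hcolspan j i
  refine ⟨blockCode hA col T hT, fun i => ?_⟩
  obtain ⟨j, hj⟩ := hcover i
  have hcard : ∀ j, (T i j).card = if i ∈ S j then 1 else ℓ := fun j => by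
    by_cases h : i ∈ S j <;> simp [T, h]
  simpa [card_blockCode_R, hcard, Fintype.card_fin] using
    sum_ite_one_le (fun j => i ∈ S j) (hQ i) (t j i hj).pos

end IndexCoding

theorem betaStar_le_of_indexCode {A : Type*} {N m ℓ : ℕ} {G : IndexProblem N} {r : ℝ}
    (hm : 0 < m) (C : IndexCode N G A m (m * ℓ)) (hC : ∀ i, ((C.R i).card : ℝ) ≤ r * m) :
    betaStar A G r ≤ ℓ := by
  refine csInf_le ⟨0, ?_⟩ ⟨m, m * ℓ, hm, C, hC, ?_⟩
  · rintro _ ⟨m, ℓ, -, -, -, rfl⟩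
    positivity
  · have : (m : ℝ) ≠ 0 := by positivity
    push_cast
    field_simp

/-- if `G` has a `Q`-fold acyclic induced subgraph cover by `M` subsets and a
valid scalar linear index code of length `ℓ`, then `G` has a vector linear index code with
message length `M`, broadcast rate `ℓ` and locality at most `(Q + (M−Q)ℓ)/M`; hence
`β_G^*((Q + (M−Q)ℓ)/M) ≤ ℓ`. -/
theorem ais_cover_theorem {N M Q ℓ : ℕ} {F : Type*} [Field F]
    (G : IndexProblem N) (S : Fin M → Finset (Fin N))
    (hcover : ∀ i : Fin N, ∃ j, i ∈ S j)
    (hQ : ∀ i : Fin N, Q ≤ (Finset.univ.filter fun j => i ∈ S j).card)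
    (hacyc : ∀ j, ¬ HasDirCycleIn G.K (S j))
    (hB : ∃ B : Matrix (Fin N) (Fin ℓ) F, IsValidEncMatrix G B) :
    (∃ C : IndexCode N G F M (M * ℓ), ∀ i,
        ((C.R i).card : ℝ) ≤ (Q : ℝ) + ((M : ℝ) - Q) * ℓ) ∧
    betaStar F G (((Q : ℝ) + ((M : ℝ) - Q) * ℓ) / M) ≤ ℓ := by
  obtain ⟨B, hB⟩ := hB
  obtain ⟨C, hC⟩ := exists_indexCode_of_aisCover S hcover hQ hacyc hB
  refine ⟨⟨C, hC⟩, ?_⟩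
  rcases isEmpty_or_nonempty (Fin N) with hN | ⟨⟨i⟩⟩
  · exact betaStar_le_of_indexCode one_pos ⟨0, fun _ => ∅, isEmptyElim⟩ isEmptyElim
  · obtain ⟨j, -⟩ := hcover i
    refine betaStar_le_of_indexCode j.pos C fun i' => ?_
    rw [div_mul_cancel₀ _ (Nat.cast_ne_zero.2 j.pos.ne')]
    exact hC i'
end

section
/- If the cyclic permutation σ(i) = i mod N + 1 is an automorphism of the side information graph G, and κ_q is the minrank of G over F_q, then β_G*( κ_q(N − κ_q + 1)/N ) ≤ κ_q. -/
open Finset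

open Classical

/-- The minrank of `G` over `F`: the minimum rank among matrices fitting `G`. -/
noncomputable def minrank {N : ℕ} (F : Type*) [Field F] (G : IndexProblem N) : ℕ :=
  sInf {r : ℕ | ∃ A : Matrix (Fin N) (Fin N) F, Fits G A ∧ A.rank = r}

/-! Every column of a fitting matrix `A` lies in the span of `κ = rank A` chosen columns `S`, so in
the scalar linear code `x ↦ x A_S` receiver `c` decodes from the single symbol of column `c` when
`c ∈ S`, and from all `κ` symbols otherwise. Send `N` copies of this code, the `s`-th one encoding
the `s`-th symbols of the messages with indices shifted by `s`; cyclic symmetry makes every copy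
valid, and receiver `i` plays the role of `i - s` in copy `s`, so it is cheap in exactly `κ` of
the `N` copies and reads `κ + (N - κ) κ` of the `N κ` symbols to decode its `N` message symbols. -/

open Matrix

namespace IndexProblem

variable {N : ℕ}

open Fin.NatCast in
theorem add_mem_K_add [NeZero N] (G : IndexProblem N)
    (hG : ∀ i j : Fin N, j ∈ G.K i → j + 1 ∈ G.K (i + 1)) (s : Fin N) {i j : Fin N}
    (h : j ∈ G.K i) : j + s ∈ G.K (i + s) := by
  suffices ∀ n : ℕ, j + n ∈ G.K (i + n) by simpa using this s.val
  intro n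
  induction n with
  | zero => simpa using h
  | succ n ih => simpa [add_assoc] using hG _ _ ih

/-- Receiver `c` reads the coordinates `Q c` of the codeword `x B`; decodability is stated for the
difference `d = x - y` of two message vectors. -/
def IsLocalLinearCode {ι F : Type*} [Ring F] (G : IndexProblem N) (B : Matrix (Fin N) ι F)
    (Q : Fin N → Finset ι) : Prop :=
  ∀ (c : Fin N) (d : Fin N → F),
    (∀ t ∈ Q c, vecMul d B t = 0) → (∀ k ∈ G.K c, d k = 0) → d c = 0

theorem IsLocalLinearCode.exists_indexCode [NeZero N] {ι F : Type*} [Fintype ι] [Ring F]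
    {G : IndexProblem N} (hG : ∀ s i j : Fin N, j ∈ G.K i → j + s ∈ G.K (i + s))
    {B : Matrix (Fin N) ι F} {Q : Fin N → Finset ι} (hB : G.IsLocalLinearCode B Q) :
    ∃ C : IndexCode N G F N (N * Fintype.card ι), ∀ i, #(C.R i) = ∑ c, #(Q c) := by
  let e : Fin N × ι ≃ Fin (N * Fintype.card ι) :=
    (Equiv.prodCongr (.refl _) (Fintype.equivFin ι)).trans finProdFinEquiv
  refine ⟨⟨fun x c => vecMul (fun k => x (k + (e.symm c).1) (e.symm c).1) B (e.symm c).2,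
    fun i => ({p : Fin N × ι | p.2 ∈ Q (i - p.1)} : Finset _).map e.toEmbedding, ?_⟩, fun i => ?_⟩
  · intro i x y henc hside
    funext s
    -- symbol `s` of message `i` is decoded by receiver `i - s` of the `s`-th copy
    have key := hB (i - s) ((fun k => x (k + s) s) - fun k => y (k + s) s) ?_ ?_
    · simpa [sub_eq_zero] using key
    · intro t ht
      simpa [sub_vecMul, sub_eq_zero] using henc (e (s, t)) (by simpa using ht)
    · intro k hk
      simpa [sub_eq_zero] using congrFun (hside _ (by simpa using hG s _ _ hk)) s
  · rw [card_map, card_filter, Fintype.sum_prod_type]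
    simp only [sum_boole, filter_univ_mem, Nat.cast_id]
    exact Fintype.sum_equiv (Equiv.subLeft i) _ _ fun _ => rfl

end IndexProblem

theorem Matrix.exists_card_eq_rank_col_mem_span {m n F : Type*} [Fintype n] [Field F]
    (A : Matrix m n F) :
    ∃ S : Finset n, #S = A.rank ∧ ∀ c, A.col c ∈ Submodule.span F (A.col '' S) := by
  obtain ⟨b, -, -, hspan, hli⟩ :=
    exists_linearIndepOn_extension (linearIndepOn_empty F A.col) (Set.subset_univ ∅)
  rw [Set.image_univ] at hspan
  have hspan_eq : Submodule.span F (A.col '' b) = Submodule.span F (Set.range A.col) :=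
    le_antisymm (Submodule.span_mono (Set.image_subset_range _ _)) (Submodule.span_le.2 hspan)
  refine ⟨b.toFinset, ?_, fun c => by simpa using hspan ⟨c, rfl⟩⟩
  rw [rank_eq_finrank_span_cols, ← hspan_eq, Set.image_eq_range, finrank_span_eq_card hli,
    Set.toFinset_card]

theorem Fits.eq_zero_of_vecMul_eq_zero {N : ℕ} {F : Type*} [Field F] {G : IndexProblem N}
    {A : Matrix (Fin N) (Fin N) F} (hA : Fits G A) {c : Fin N} {d : Fin N → F}
    (hside : ∀ k ∈ G.K c, d k = 0) (h : vecMul d A c = 0) : d c = 0 := by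
  have hdiag : vecMul d A c = d c * A c c := by
    refine Fintype.sum_eq_single c fun k hk => ?_
    by_cases hkc : k ∈ G.K c
    · simp [hside k hkc]
    · simp [hA.2 c k hk hkc]
  rwa [hdiag, hA.1 c, mul_one] at h

def columnQuery {n : Type*} [DecidableEq n] (S : Finset n) (c : n) : Finset S :=
  if h : c ∈ S then {⟨c, h⟩} else univ

theorem sum_card_columnQuery {n : Type*} [Fintype n] [DecidableEq n] (S : Finset n) :
    ∑ c, #(columnQuery S c) = #S + (Fintype.card n - #S) * #S := by
  have hcard : ∀ c, #(columnQuery S c) = if c ∈ S then 1 else #S := fun c => by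
    by_cases hc : c ∈ S <;> simp [columnQuery, hc]
  simp only [hcard, sum_ite, sum_const, smul_eq_mul, mul_one, filter_univ_mem,
    filter_not, card_sdiff, card_univ, inter_univ]

theorem Fits.isLocalLinearCode {N : ℕ} {F : Type*} [Field F] {G : IndexProblem N}
    {A : Matrix (Fin N) (Fin N) F} (hA : Fits G A) {S : Finset (Fin N)}
    (hS : ∀ c, A.col c ∈ Submodule.span F (A.col '' S)) :
    G.IsLocalLinearCode (A.submatrix id ((↑) : S → Fin N)) (columnQuery S) := by
  intro c d hQ hside
  refine hA.eq_zero_of_vecMul_eq_zero hside ?_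
  by_cases hc : c ∈ S
  · exact hQ ⟨c, hc⟩ (by simp [columnQuery, hc])
  · have hker : Submodule.span F (A.col '' S) ≤ LinearMap.ker (dotProductBilin F F d) := by
      rw [Submodule.span_le]
      rintro _ ⟨j, hj, rfl⟩
      exact hQ ⟨j, hj⟩ (by simp [columnQuery, hc])
    exact hker (hS c)

theorem exists_fits_rank_eq_minrank {N : ℕ} (F : Type*) [Field F] (G : IndexProblem N) :
    ∃ A : Matrix (Fin N) (Fin N) F, Fits G A ∧ A.rank = minrank F G := by
  have hId : Fits G (1 : Matrix (Fin N) (Fin N) F) :=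
    ⟨fun i => one_apply_eq i, fun i j hji _ => one_apply_ne hji⟩
  exact Nat.sInf_mem (s := {r | ∃ A : Matrix (Fin N) (Fin N) F, Fits G A ∧ A.rank = r})
    ⟨_, 1, hId, rfl⟩

theorem betaStar_le_div {A : Type*} {N m ℓ : ℕ} {G : IndexProblem N} {r : ℝ} (hm : 0 < m)
    (C : IndexCode N G A m ℓ) (hC : ∀ i, (#(C.R i) : ℝ) ≤ r * m) :
    betaStar A G r ≤ ℓ / m :=
  csInf_le ⟨0, by rintro _ ⟨_, _, _, _, _, rfl⟩; positivity⟩ ⟨m, ℓ, hm, C, hC, rfl⟩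

theorem cyclic_symmetry_locality_general (N : ℕ) (hN : 0 < N) (G : IndexProblem N)
    (F : Type*) [Field F]
    (hAut : ∀ i j : Fin N,
      j ∈ G.K i ↔ (⟨(j.val + 1) % N, Nat.mod_lt _ hN⟩ : Fin N) ∈
        G.K ⟨(i.val + 1) % N, Nat.mod_lt _ hN⟩) :
    betaStar F G (((minrank F G : ℝ) * ((N : ℝ) - (minrank F G : ℝ) + 1)) / N)
      ≤ (minrank F G : ℝ) := by
  have : NeZero N := ⟨hN.ne'⟩
  have hsucc : ∀ j : Fin N, (⟨(j.val + 1) % N, Nat.mod_lt _ hN⟩ : Fin N) = j + 1 := fun j =>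
    Fin.ext (by simp [Fin.val_add])
  have hshift : ∀ s i j : Fin N, j ∈ G.K i → j + s ∈ G.K (i + s) := fun s i j hj =>
    G.add_mem_K_add (fun i j hj => by simpa only [hsucc] using (hAut i j).1 hj) s hj
  obtain ⟨A, hA, hrank⟩ := exists_fits_rank_eq_minrank F G
  obtain ⟨S, hS, hspan⟩ := A.exists_card_eq_rank_col_mem_span
  obtain ⟨C, hC⟩ := (hA.isLocalLinearCode hspan).exists_indexCode hshift
  have hκ : minrank F G ≤ N := hrank ▸ A.rank_le_width
  refine (betaStar_le_div hN C fun i => le_of_eq ?_).trans_eq ?_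
  · rw [hC i, sum_card_columnQuery, hS, hrank, Fintype.card_fin]
    push_cast [hκ]
    field_simp
    ring
  · rw [Fintype.card_coe, hS, hrank]
    push_cast
    field_simp

/-- if the cyclic shift `σ(i) = i mod N + 1` is an automorphism of `G` and
`κ_q` is the minrank of `G` over `F_q`, then `β_G^*( κ_q (N − κ_q + 1) / N ) ≤ κ_q`. -/
theorem cyclic_symmetry_locality (N : ℕ) (hN : 0 < N) (G : IndexProblem N)
    (F : Type*) [Field F] [Fintype F]
    (hAut : ∀ i j : Fin N,
      j ∈ G.K i ↔ (⟨(j.val + 1) % N, Nat.mod_lt _ hN⟩ : Fin N) ∈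
        G.K ⟨(i.val + 1) % N, Nat.mod_lt _ hN⟩) :
    betaStar F G (((minrank F G : ℝ) * ((N : ℝ) - (minrank F G : ℝ) + 1)) / N)
      ≤ (minrank F G : ℝ) :=
  cyclic_symmetry_locality_general N hN G F hAut
end

section
/- For the unicast index coding problem whose side information graph G is the directed 3-cycle (receivers (1,{2}), (2,{3}), (3,{1})), any valid index code with symmetric query sets satisfies β ≥ 6 − 3r, and hence β_G*(r) ≥ max{6 − 3r, 2} for all r ≥ 1. -/
open Finset

/-- The directed `3`-cycle side information graph: receivers `(1,{2})`, `(2,{3})`, `(3,{1})`. -/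
def cycle3 : IndexProblem 3 :=
  ⟨![{1}, {2}, {0}], by decide⟩

lemma union_card_ge {A : Type*} [Fintype A] (hA : 1 < Fintype.card A)
    {m ℓ : ℕ} (C : IndexCode 3 cycle3 A m ℓ) (i j k : Fin 3)
    (hij : i ≠ j) (hjk : j ≠ k) (hik : i ≠ k)
    (hKi : cycle3.K i = {k}) (hKj : cycle3.K j = {i}) :
    2 * m ≤ (C.R i ∪ C.R j).card := by
  have hA0 : Nonempty A := Fintype.card_pos_iff.mp (by omega)
  set z : Fin m → A := fun _ => Classical.arbitrary A with hz
  set g : (Fin m → A) × (Fin m → A) → Fin 3 → Fin m → A :=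
    fun p => Function.update (Function.update (fun _ => z) i p.1) j p.2 with hg
  have hgi : ∀ p, g p i = p.1 := by
    intro p; simp [hg, Function.update_of_ne hij, Function.update_self]
  have hgj : ∀ p, g p j = p.2 := by
    intro p; simp [hg]
  have hgk : ∀ p, g p k = z := by
    intro p; simp [hg, Function.update_of_ne (Ne.symm hjk), Function.update_of_ne (Ne.symm hik)]
  set F : ((Fin m → A) × (Fin m → A)) → ((C.R i ∪ C.R j : Finset (Fin ℓ)) → A) :=
    fun p t => C.enc (g p) t.1 with hF
  have hFinj : Function.Injective F := by
    intro p q h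
    have henc : ∀ t ∈ C.R i ∪ C.R j, C.enc (g p) t = C.enc (g q) t := by
      intro t ht; exact congrFun h ⟨t, ht⟩
    have h1 : g p i = g q i := by
      apply C.valid i (g p) (g q)
      · intro t ht; exact henc t (mem_union_left _ ht)
      · intro a ha
        rw [hKi, mem_singleton] at ha; subst ha
        rw [hgk, hgk]
    have h2 : g p j = g q j := by
      apply C.valid j (g p) (g q)
      · intro t ht; exact henc t (mem_union_right _ ht)
      · intro a ha
        rw [hKj, mem_singleton] at ha; subst ha
        exact h1
    rw [hgi, hgi] at h1
    rw [hgj, hgj] at h2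
    exact Prod.ext h1 h2
  have hcard := Fintype.card_le_of_injective F hFinj
  have hc1 : Fintype.card ((Fin m → A) × (Fin m → A)) = Fintype.card A ^ (2 * m) := by
    simp [two_mul, pow_add]
  have hc2 : Fintype.card ((C.R i ∪ C.R j : Finset (Fin ℓ)) → A)
      = Fintype.card A ^ (C.R i ∪ C.R j).card := by
    simp only [Fintype.card_fun, Fintype.card_coe]
  rw [hc1, hc2] at hcard
  exact (Nat.pow_le_pow_iff_right hA).mp hcard

lemma six_m_le {A : Type*} [Fintype A] (hA : 1 < Fintype.card A)
    {m ℓ : ℕ} (C : IndexCode 3 cycle3 A m ℓ) :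
    6 * m ≤ ℓ + (C.R 0).card + (C.R 1).card + (C.R 2).card ∧ 2 * m ≤ ℓ := by
  have h02 : 2 * m ≤ (C.R 0 ∪ C.R 2).card :=
    union_card_ge hA C 0 2 1 (by decide) (by decide) (by decide) rfl rfl
  have h10 : 2 * m ≤ (C.R 1 ∪ C.R 0).card :=
    union_card_ge hA C 1 0 2 (by decide) (by decide) (by decide) rfl rfl
  have h21 : 2 * m ≤ (C.R 2 ∪ C.R 1).card :=
    union_card_ge hA C 2 1 0 (by decide) (by decide) (by decide) rfl rfl
  have e02 := card_union_add_card_inter (C.R 0) (C.R 2)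
  have e10 := card_union_add_card_inter (C.R 1) (C.R 0)
  have e21 := card_union_add_card_inter (C.R 2) (C.R 1)
  -- inclusion-exclusion for three sets (lower bound form)
  have eU1 := card_union_add_card_inter (C.R 0 ∪ C.R 1) (C.R 2)
  have eU2 := card_union_add_card_inter (C.R 0) (C.R 1)
  have hsub : (C.R 0 ∪ C.R 1) ∩ C.R 2 ⊆ (C.R 0 ∩ C.R 2) ∪ (C.R 1 ∩ C.R 2) := by
    intro t ht
    simp only [mem_inter, mem_union] at *
    tauto
  have hsubc : ((C.R 0 ∪ C.R 1) ∩ C.R 2).card ≤ (C.R 0 ∩ C.R 2).card + (C.R 1 ∩ C.R 2).card :=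
    le_trans (card_le_card hsub) (card_union_le _ _)
  have hℓ : (C.R 0 ∪ C.R 1 ∪ C.R 2).card ≤ ℓ := by
    have := card_le_univ (C.R 0 ∪ C.R 1 ∪ C.R 2)
    simpa using this
  have hi02 : (C.R 0 ∩ C.R 2).card + 2 * m ≤ (C.R 0).card + (C.R 2).card := by omega
  have hi10 : (C.R 1 ∩ C.R 0).card + 2 * m ≤ (C.R 1).card + (C.R 0).card := by omega
  have hi21 : (C.R 2 ∩ C.R 1).card + 2 * m ≤ (C.R 2).card + (C.R 1).card := by omega
  have hcomm1 : (C.R 1 ∩ C.R 0).card = (C.R 0 ∩ C.R 1).card := by rw [inter_comm]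
  have hcomm2 : (C.R 2 ∩ C.R 1).card = (C.R 1 ∩ C.R 2).card := by rw [inter_comm]
  constructor
  · omega
  · have : (C.R 0 ∪ C.R 2).card ≤ ℓ := by
      have := card_le_univ (C.R 0 ∪ C.R 2)
      simpa using this
    omega

/-- The trivial code of length 3 on one-symbol messages, witnessing nonemptiness. -/
def trivialCode (A : Type*) : IndexCode 3 cycle3 A 1 3 where
  enc := fun x t => x t 0
  R := fun i => {i}
  valid := by
    intro i x y h1 _
    funext j
    have hj : j = 0 := Subsingleton.elim _ _
    subst hj
    exact h1 i (mem_singleton_self i)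


/-- for the directed `3`-cycle, any valid index code whose query sets are
symmetric (equal cardinalities and equal pairwise intersection cardinalities) satisfies
`β ≥ 6 − 3r`; hence `β_G^*(r) ≥ max{6 − 3r, 2}` for all `r ≥ 1`. -/
theorem cycle3_converse (A : Type*) [Fintype A] (hA : 1 < Fintype.card A) :
    (∀ (m ℓ : ℕ), 0 < m → ∀ C : IndexCode 3 cycle3 A m ℓ,
      ((C.R 0).card = (C.R 1).card ∧ (C.R 1).card = (C.R 2).card) →
      ((C.R 0 ∩ C.R 1).card = (C.R 1 ∩ C.R 2).card ∧
        (C.R 1 ∩ C.R 2).card = (C.R 2 ∩ C.R 0).card) →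
      6 - 3 * (((C.R 0).card : ℝ) / m) ≤ (ℓ : ℝ) / m) ∧
    ∀ r : ℝ, 1 ≤ r → max (6 - 3 * r) 2 ≤ betaStar A cycle3 r := by
  constructor
  · intro m ℓ hm C hsym _
    have h6 := (six_m_le hA C).1
    have hmR : (0:ℝ) < m := by exact_mod_cast hm
    have h6' : (6:ℝ) * m ≤ ℓ + 3 * (C.R 0).card := by
      have : (6 * m : ℕ) ≤ ℓ + 3 * (C.R 0).card := by omega
      exact_mod_cast this
    have expand : (6 - 3 * (((C.R 0).card : ℝ) / m)) * m = 6 * m - 3 * (C.R 0).card := by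
      field_simp
    rw [le_div_iff₀ hmR, expand]
    linarith
  · intro r hr
    rw [betaStar]
    apply le_csInf
    · refine ⟨3, 1, 3, one_pos, trivialCode A, ?_, by norm_num⟩
      intro i
      simp [trivialCode]
      linarith
    · rintro β ⟨m, ℓ, hm, C, hloc, rfl⟩
      have hmR : (0:ℝ) < m := by exact_mod_cast hm
      obtain ⟨h6, h2⟩ := six_m_le hA C
      apply max_le
      · have h6' : (6:ℝ) * m ≤ ℓ + (C.R 0).card + (C.R 1).card + (C.R 2).card := by
          have h := (Nat.cast_le (α := ℝ)).mpr h6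
          push_cast at h
          linarith
        have hsum : ((C.R 0).card : ℝ) + (C.R 1).card + (C.R 2).card ≤ 3 * (r * m) := by
          have := hloc 0; have := hloc 1; have := hloc 2; linarith
        rw [le_div_iff₀ hmR]
        nlinarith
      · rw [le_div_iff₀ hmR]
        have : (2:ℝ) * m ≤ ℓ := by exact_mod_cast h2
        linarith
end

section
/- For the directed 3-cycle unicast index coding problem G, the locality-broadcast rate trade-off is exactly β_G*(r) = max{6 − 3r, 2} for all r ≥ 1. -/
open Finset

/-- the trivial empty code -/
def zeroCode {N : ℕ} {G : IndexProblem N} {A : Type*} : IndexCode N G A 0 0 where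
  enc _ := Fin.elim0
  R _ := ∅
  valid _ _ _ _ _ := funext fun p => p.elim0

/-- concatenation of two codes -/
def IndexCode.concat {N : ℕ} {G : IndexProblem N} {A : Type*} {m ℓ m' ℓ' : ℕ}
    (C : IndexCode N G A m ℓ) (C' : IndexCode N G A m' ℓ') :
    IndexCode N G A (m + m') (ℓ + ℓ') where
  enc x := Fin.append (C.enc fun i p => x i (Fin.castAdd m' p))
                      (C'.enc fun i p => x i (Fin.natAdd m p))
  R i := (C.R i).map (Fin.castAddEmb ℓ') ∪ (C'.R i).map (Fin.natAddEmb ℓ)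
  valid := by
    intro i x y hc hk
    have hL : (fun p => x i (Fin.castAdd m' p)) = (fun p => y i (Fin.castAdd m' p)) := by
      apply C.valid i
      · intro t ht
        have := hc (Fin.castAdd ℓ' t)
          (Finset.mem_union_left _ (Finset.mem_map_of_mem _ ht))
        simpa [Fin.append_left] using this
      · intro j hj; rw [hk j hj]
    have hR : (fun p => x i (Fin.natAdd m p)) = (fun p => y i (Fin.natAdd m p)) := by
      apply C'.valid i
      · intro t ht
        have := hc (Fin.natAdd ℓ t)
          (Finset.mem_union_right _ (Finset.mem_map_of_mem _ ht))
        simpa [Fin.append_right] using this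
      · intro j hj; rw [hk j hj]
    funext p
    refine Fin.addCases (fun q => ?_) (fun q => ?_) p
    · exact congrFun hL q
    · exact congrFun hR q

lemma IndexCode.concat_card {N : ℕ} {G : IndexProblem N} {A : Type*} {m ℓ m' ℓ' : ℕ}
    (C : IndexCode N G A m ℓ) (C' : IndexCode N G A m' ℓ') (i : Fin N) :
    ((C.concat C').R i).card ≤ (C.R i).card + (C'.R i).card := by
  refine (Finset.card_union_le _ _).trans ?_
  simp [IndexCode.concat]

/-- `a`-fold repetition of a code -/
def IndexCode.pow {N : ℕ} {G : IndexProblem N} {A : Type*} {m ℓ : ℕ}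
    (C : IndexCode N G A m ℓ) : (a : ℕ) → IndexCode N G A (m * a) (ℓ * a)
  | 0 => zeroCode
  | a + 1 => (C.pow a).concat C

lemma IndexCode.pow_card {N : ℕ} {G : IndexProblem N} {A : Type*} {m ℓ : ℕ}
    (C : IndexCode N G A m ℓ) (a : ℕ) (i : Fin N) :
    ((C.pow a).R i).card ≤ (C.R i).card * a := by
  induction a with
  | zero => simp [IndexCode.pow, zeroCode]
  | succ a ih =>
    refine (IndexCode.concat_card _ _ i).trans ?_
    rw [Nat.mul_succ]
    omega

lemma addcl {A : Type*} [AddCommGroup A] {a b c d : A} (h : a + b = c + d) (h2 : b = d) :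
    a = c := by rw [h2] at h; exact add_right_cancel h

lemma addcr {A : Type*} [AddCommGroup A] {a b c d : A} (h : a + b = c + d) (h2 : a = c) :
    b = d := by rw [h2] at h; exact add_left_cancel h

/-- the uncoded scheme: rate 3, locality 1 -/
def uncodedCode (A : Type*) [AddCommGroup A] : IndexCode 3 cycle3 A 1 3 where
  enc x := ![x 0 0, x 1 0, x 2 0]
  R := ![{0}, {1}, {2}]
  valid := by
    intro i x y hc hk
    fin_cases i
    · funext p; fin_cases p; simpa using hc 0 (by decide)
    · funext p; fin_cases p; simpa using hc 1 (by decide)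
    · funext p; fin_cases p; simpa using hc 2 (by decide)

/-- the balanced scheme: rate 2, locality 4/3 -/
def balancedCode (A : Type*) [AddCommGroup A] : IndexCode 3 cycle3 A 3 6 where
  enc x := ![x 1 0 + x 2 0, x 2 0 + x 0 0, x 2 1 + x 0 1, x 0 1 + x 1 1,
             x 0 2 + x 1 2, x 1 2 + x 2 2]
  R := ![{0, 1, 3, 4}, {0, 2, 3, 5}, {1, 2, 4, 5}]
  valid := by
    intro i x y hc hk
    fin_cases i
    · have hs : x 1 = y 1 := hk 1 (by decide)
      have h0 : x 1 0 + x 2 0 = y 1 0 + y 2 0 := by simpa using hc 0 (by decide)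
      have h1 : x 2 0 + x 0 0 = y 2 0 + y 0 0 := by simpa using hc 1 (by decide)
      have h3 : x 0 1 + x 1 1 = y 0 1 + y 1 1 := by simpa using hc 3 (by decide)
      have h4 : x 0 2 + x 1 2 = y 0 2 + y 1 2 := by simpa using hc 4 (by decide)
      funext j
      fin_cases j
      · exact addcr h1 (addcr h0 (congrFun hs 0))
      · exact addcl h3 (congrFun hs 1)
      · exact addcl h4 (congrFun hs 2)
    · have hs : x 2 = y 2 := hk 2 (by decide)
      have h0 : x 1 0 + x 2 0 = y 1 0 + y 2 0 := by simpa using hc 0 (by decide)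
      have h2 : x 2 1 + x 0 1 = y 2 1 + y 0 1 := by simpa using hc 2 (by decide)
      have h3 : x 0 1 + x 1 1 = y 0 1 + y 1 1 := by simpa using hc 3 (by decide)
      have h5 : x 1 2 + x 2 2 = y 1 2 + y 2 2 := by simpa using hc 5 (by decide)
      funext j
      fin_cases j
      · exact addcl h0 (congrFun hs 0)
      · exact addcr h3 (addcr h2 (congrFun hs 1))
      · exact addcl h5 (congrFun hs 2)
    · have hs : x 0 = y 0 := hk 0 (by decide)
      have h1 : x 2 0 + x 0 0 = y 2 0 + y 0 0 := by simpa using hc 1 (by decide)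
      have h2 : x 2 1 + x 0 1 = y 2 1 + y 0 1 := by simpa using hc 2 (by decide)
      have h4 : x 0 2 + x 1 2 = y 0 2 + y 1 2 := by simpa using hc 4 (by decide)
      have h5 : x 1 2 + x 2 2 = y 1 2 + y 2 2 := by simpa using hc 5 (by decide)
      funext j
      fin_cases j
      · exact addcl h1 (congrFun hs 0)
      · exact addcl h2 (congrFun hs 1)
      · exact addcr h5 (addcr h4 (congrFun hs 2))

lemma uncoded_card {A : Type*} [AddCommGroup A] (i : Fin 3) :
    ((uncodedCode A).R i).card = 1 := by fin_cases i <;> rfl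

lemma balanced_card {A : Type*} [AddCommGroup A] (i : Fin 3) :
    ((balancedCode A).R i).card = 4 := by fin_cases i <;> rfl

/-- pairwise converse: receivers `p` (knowing `q`) and `q` (knowing `z`) force
`2m` codeword symbols among their queries. -/
lemma pair_bound {A : Type*} [Fintype A] [DecidableEq A] [AddCommGroup A]
    (hA : 1 < Fintype.card A) {m ℓ : ℕ} (C : IndexCode 3 cycle3 A m ℓ)
    (p q z : Fin 3) (hpq : p ≠ q) (hpz : p ≠ z) (hqz : q ≠ z)
    (hKq : cycle3.K q = {z}) (hKp : cycle3.K p = {q}) :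
    2 * m ≤ (C.R p ∪ C.R q).card := by
  classical
  set S := C.R p ∪ C.R q with hS
  let X : (Fin m → A) → (Fin m → A) → Fin 3 → Fin m → A :=
    fun a b w => if w = p then a else if w = q then b else 0
  have hXp : ∀ a b, X a b p = a := fun a b => by simp [X]
  have hXq : ∀ a b, X a b q = b := fun a b => by simp [X, hpq.symm]
  have hXz : ∀ a b, X a b z = 0 := fun a b => by simp [X, hpz.symm, hqz.symm]
  let Φ : ((Fin m → A) × (Fin m → A)) → ({ t // t ∈ S } → A) :=
    fun ab t => C.enc (X ab.1 ab.2) t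
  have hinj : Function.Injective Φ := by
    rintro ⟨a, b⟩ ⟨a', b'⟩ h
    have hq' : X a b q = X a' b' q := by
      apply C.valid q
      · intro t ht
        exact congrFun h ⟨t, Finset.mem_union_right _ ht⟩
      · intro j hj
        rw [hKq, Finset.mem_singleton] at hj
        subst hj
        rw [hXz, hXz]
    have hp' : X a b p = X a' b' p := by
      apply C.valid p
      · intro t ht
        exact congrFun h ⟨t, Finset.mem_union_left _ ht⟩
      · intro j hj
        rw [hKp, Finset.mem_singleton] at hj
        subst hj
        exact hq'
    rw [hXp, hXp] at hp'
    rw [hXq, hXq] at hq'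
    exact Prod.ext hp' hq'
  have hcard := Fintype.card_le_of_injective Φ hinj
  rw [Fintype.card_prod, Fintype.card_fun, Fintype.card_fun, Fintype.card_fin,
    Fintype.card_coe, ← pow_add] at hcard
  have := (Nat.pow_le_pow_iff_right hA).1 hcard
  omega

lemma union_card_bound {α : Type*} [DecidableEq α] (R0 R1 R2 : Finset α) :
    (R0 ∪ R1).card + (R1 ∪ R2).card + (R2 ∪ R0).card ≤
      R0.card + R1.card + R2.card + (R0 ∪ R1 ∪ R2).card := by
  have h1 : ((R0 ∪ R1) ∪ (R1 ∪ R2)).card + ((R0 ∪ R1) ∩ (R1 ∪ R2)).card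
      = (R0 ∪ R1).card + (R1 ∪ R2).card := Finset.card_union_add_card_inter _ _
  have h2 : ((R0 ∪ R1) ∩ (R1 ∪ R2)).card ≤ (R1 ∪ (R0 ∩ R2)).card := by
    apply Finset.card_le_card
    intro t ht
    simp only [Finset.mem_inter, Finset.mem_union] at ht ⊢
    tauto
  have h3 : (R1 ∪ (R0 ∩ R2)).card ≤ R1.card + (R0 ∩ R2).card := Finset.card_union_le _ _
  have h4 : (R2 ∪ R0).card + (R2 ∩ R0).card = R2.card + R0.card :=
    Finset.card_union_add_card_inter _ _
  have h5 : (R0 ∩ R2).card = (R2 ∩ R0).card := by rw [Finset.inter_comm]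
  have h6 : ((R0 ∪ R1) ∪ (R1 ∪ R2)).card = (R0 ∪ R1 ∪ R2).card := by
    congr 1
    ext t
    simp only [Finset.mem_union]
    tauto
  omega

/-- the full converse bound -/
lemma converse_bound {A : Type*} [Fintype A] [DecidableEq A] [AddCommGroup A]
    (hA : 1 < Fintype.card A) {m ℓ : ℕ} (hm : 0 < m) (C : IndexCode 3 cycle3 A m ℓ)
    {r : ℝ} (hloc : ∀ i, ((C.R i).card : ℝ) ≤ r * m) :
    max (6 - 3 * r) 2 ≤ (ℓ : ℝ) / m := by
  have hb01 : 2 * m ≤ (C.R 0 ∪ C.R 1).card :=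
    pair_bound hA C 0 1 2 (by decide) (by decide) (by decide) (by decide) (by decide)
  have hb12 : 2 * m ≤ (C.R 1 ∪ C.R 2).card :=
    pair_bound hA C 1 2 0 (by decide) (by decide) (by decide) (by decide) (by decide)
  have hb20 : 2 * m ≤ (C.R 2 ∪ C.R 0).card :=
    pair_bound hA C 2 0 1 (by decide) (by decide) (by decide) (by decide) (by decide)
  have hsub : (C.R 0 ∪ C.R 1 ∪ C.R 2).card ≤ ℓ := by
    have := Finset.card_le_card (Finset.subset_univ (C.R 0 ∪ C.R 1 ∪ C.R 2))
    simpa using this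
  have hsub2 : (C.R 0 ∪ C.R 1).card ≤ ℓ := by
    have h : (C.R 0 ∪ C.R 1) ⊆ (C.R 0 ∪ C.R 1 ∪ C.R 2) := Finset.subset_union_left
    have := Finset.card_le_card h
    omega
  have hkey := union_card_bound (C.R 0) (C.R 1) (C.R 2)
  have h6 : 6 * m ≤ (C.R 0).card + (C.R 1).card + (C.R 2).card + ℓ := by omega
  have h2 : 2 * m ≤ ℓ := by omega
  have hm' : (0 : ℝ) < m := by exact_mod_cast hm
  rw [max_le_iff]
  constructor
  · rw [sub_le_iff_le_add, div_add' _ _ _ (ne_of_gt hm'), le_div_iff₀ hm']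
    have hc : (6 * m : ℝ) ≤ ((C.R 0).card + (C.R 1).card + (C.R 2).card + ℓ : ℕ) := by
      exact_mod_cast h6
    push_cast at hc
    have := hloc 0
    have := hloc 1
    have := hloc 2
    nlinarith
  · rw [le_div_iff₀ hm']
    have : (2 * m : ℝ) ≤ (ℓ : ℝ) := by exact_mod_cast h2
    linarith

/-- the mixed (time-shared) scheme yields an achievable point -/
lemma mix_mem (A : Type*) [Fintype A] [DecidableEq A] [AddCommGroup A] (r : ℝ) (a b : ℕ)
    (hm : 0 < a + 3 * b) (hloc : (a : ℝ) + 4 * (b : ℝ) ≤ r * ((a : ℝ) + 3 * (b : ℝ))) :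
    ((3 * a + 6 * b : ℕ) : ℝ) / ((1 * a + 3 * b : ℕ) : ℝ) ∈
      {β : ℝ | ∃ (m ℓ : ℕ) (_ : 0 < m) (C : IndexCode 3 cycle3 A m ℓ),
        (∀ i, ((C.R i).card : ℝ) ≤ r * m) ∧ β = (ℓ : ℝ) / m} := by
  refine ⟨1 * a + 3 * b, 3 * a + 6 * b, by omega,
    ((uncodedCode A).pow a).concat ((balancedCode A).pow b), ?_, rfl⟩
  intro i
  have h1 : ((((uncodedCode A).pow a).concat ((balancedCode A).pow b)).R i).card
      ≤ 1 * a + 4 * b := by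
    refine (IndexCode.concat_card _ _ i).trans ?_
    have := (uncodedCode A).pow_card a i
    have := (balancedCode A).pow_card b i
    rw [uncoded_card] at *
    rw [balanced_card] at *
    omega
  have h2 : ((((uncodedCode A).pow a).concat ((balancedCode A).pow b)).R i).card ≤
      ((a : ℝ) + 4 * b) := by
    calc ((((uncodedCode A).pow a).concat ((balancedCode A).pow b)).R i).card
        ≤ ((1 * a + 4 * b : ℕ) : ℝ) := by exact_mod_cast h1
      _ = (a : ℝ) + 4 * b := by push_cast; ring
  refine h2.trans (hloc.trans ?_)
  apply le_of_eq
  congr 1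
  push_cast
  ring


/-- the locality–broadcast rate trade-off of the directed `3`-cycle is exactly
`β_G^*(r) = max{6 − 3r, 2}` for all `r ≥ 1`. -/
theorem cycle3_tradeoff (A : Type*) [Fintype A] [DecidableEq A] [AddCommGroup A]
    (hA : 1 < Fintype.card A) :
    ∀ r : ℝ, 1 ≤ r → betaStar A cycle3 r = max (6 - 3 * r) 2 := by
  intro r hr
  rw [betaStar]
  set T := {β : ℝ | ∃ (m ℓ : ℕ) (_ : 0 < m) (C : IndexCode 3 cycle3 A m ℓ),
    (∀ i, ((C.R i).card : ℝ) ≤ r * m) ∧ β = (ℓ : ℝ) / m} with hT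
  have hne : T.Nonempty := by
    refine ⟨_, mix_mem A r 1 0 (by omega) ?_⟩
    push_cast
    linarith
  have hbdd : BddBelow T := by
    refine ⟨0, fun β hβ => ?_⟩
    obtain ⟨m, ℓ, hm, C, _, rfl⟩ := hβ
    positivity
  apply le_antisymm
  · rcases le_or_gt (4 / 3 : ℝ) r with h43 | h43
    · have hmem := mix_mem A r 0 1 (by omega) (by push_cast; linarith)
      have hle := csInf_le hbdd hmem
      have hval : ((3 * 0 + 6 * 1 : ℕ) : ℝ) / ((1 * 0 + 3 * 1 : ℕ) : ℝ) = 2 := by norm_num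
      rw [hval] at hle
      exact hle.trans (le_max_right _ _)
    · rw [max_eq_left (by linarith)]
      rw [Real.sInf_le_iff hbdd hne]
      intro ε hε
      obtain ⟨n, hn⟩ := exists_nat_gt (3 / ε)
      have hn0 : (0 : ℝ) < n := lt_trans (div_pos (by norm_num) hε) hn
      have hn0' : 0 < n := by exact_mod_cast hn0
      have hεn : 3 < ε * n := by
        rw [div_lt_iff₀ hε] at hn
        linarith [hn]
      set k := ⌊(n : ℝ) * (r - 1)⌋₊ with hk
      have hr1 : (0 : ℝ) ≤ (n : ℝ) * (r - 1) := by nlinarith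
      have hk_le : (k : ℝ) ≤ (n : ℝ) * (r - 1) := Nat.floor_le hr1
      have hk_gt : (n : ℝ) * (r - 1) < k + 1 := Nat.lt_floor_add_one _
      have h3k : 3 * k ≤ n := by
        have h : ((3 * k : ℕ) : ℝ) < (n : ℝ) := by push_cast; nlinarith
        exact_mod_cast h.le
      set a := n - 3 * k with ha
      have hacast : (a : ℝ) = (n : ℝ) - 3 * k := by
        rw [ha]
        push_cast [h3k]
        ring
      have hlocr : (a : ℝ) + 4 * (k : ℝ) ≤ r * ((a : ℝ) + 3 * (k : ℝ)) := by
        rw [hacast]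
        nlinarith
      have hmem := mix_mem A r a k (by omega) hlocr
      refine ⟨_, hmem, ?_⟩
      have hden : ((1 * a + 3 * k : ℕ) : ℝ) = (n : ℝ) := by
        push_cast
        rw [hacast]
        ring
      have hnum : ((3 * a + 6 * k : ℕ) : ℝ) = 3 * (n : ℝ) - 3 * k := by
        push_cast
        rw [hacast]
        ring
      rw [hden, hnum, div_lt_iff₀ hn0]
      nlinarith
  · refine le_csInf hne fun β hβ => ?_
    obtain ⟨m, ℓ, hm, C, hloc, rfl⟩ := hβ
    exact converse_bound hA hm C hloc
end
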